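/- arXiv:2411.10419 — 6 statements merged into one kernel-verified Lean document; each statement's English description precedes it below -/
import Mathlib

section
/- There exists a constant c > 0 such that for every k ∈ ℤ², one has ∑_{ℓ ∈ ℤ², |ℓ| ≤ √2} (|ℓ|² − 2⟨k,ℓ⟩)² · ⟨k⊥,ℓ⟩² ≥ c·|k|⁴. -/
/-- Squared Euclidean norm of a lattice point `k ∈ ℤ²`. -/
noncomputable def nsq (k : ℤ × ℤ) : ℝ := (k.1 : ℝ) ^ 2 + (k.2 : ℝ) ^ 2

/-- Standard inner product on `ℝ²` of two lattice points. -/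
noncomputable def dotp (k l : ℤ × ℤ) : ℝ := (k.1 : ℝ) * (l.1 : ℝ) + (k.2 : ℝ) * (l.2 : ℝ)

/-- The rotation `k⊥ = (k₂, −k₁)`. -/
def perp (k : ℤ × ℤ) : ℤ × ℤ := (k.2, -k.1)

set_option maxHeartbeats 1000000 in
/-- Geometric non-degeneracy (Lemma 5.2): there is `c > 0` such that for every `k ∈ ℤ²`,
`∑_{|ℓ| ≤ √2} (|ℓ|² − 2⟨k,ℓ⟩)² ⟨k⊥,ℓ⟩² ≥ c |k|⁴`. -/
theorem geometric_nondegeneracy :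
    ∃ c : ℝ, 0 < c ∧ ∀ k : ℤ × ℤ,
      c * (nsq k) ^ 2 ≤
        ∑' ℓ : ℤ × ℤ,
          (if nsq ℓ ≤ 2 then (nsq ℓ - 2 * dotp k ℓ) ^ 2 * (dotp (perp k) ℓ) ^ 2 else 0) := by
  refine ⟨4, by norm_num, fun k => ?_⟩
  set s : Finset (ℤ × ℤ) :=
    {(0,0), (1,0), (-1,0), (0,1), (0,-1), (1,1), (1,-1), (-1,1), (-1,-1)} with hs
  have hzero : ∀ ℓ ∉ s,
      (if nsq ℓ ≤ 2 then (nsq ℓ - 2 * dotp k ℓ) ^ 2 * (dotp (perp k) ℓ) ^ 2 else 0) = 0 := by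
    rintro ⟨x, y⟩ hmem
    rw [if_neg]
    intro h
    have h2 : (x : ℝ) ^ 2 + (y : ℝ) ^ 2 ≤ 2 := h
    have hx2 : x ^ 2 + y ^ 2 ≤ 2 := by exact_mod_cast h2
    have hx : -1 ≤ x ∧ x ≤ 1 := by constructor <;> nlinarith [sq_nonneg y]
    have hy : -1 ≤ y ∧ y ≤ 1 := by constructor <;> nlinarith [sq_nonneg x]
    obtain ⟨hx1, hx2'⟩ := hx
    obtain ⟨hy1, hy2'⟩ := hy
    interval_cases x <;> interval_cases y <;> simp_all [hs]
  rw [tsum_eq_sum hzero]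
  obtain ⟨a, b⟩ := k
  rw [hs]
  rw [Finset.sum_insert (by decide), Finset.sum_insert (by decide),
      Finset.sum_insert (by decide), Finset.sum_insert (by decide),
      Finset.sum_insert (by decide), Finset.sum_insert (by decide),
      Finset.sum_insert (by decide), Finset.sum_insert (by decide),
      Finset.sum_singleton]
  simp only [nsq, dotp, perp]
  norm_num
  nlinarith [sq_nonneg ((a:ℝ)^2 - (b:ℝ)^2), sq_nonneg ((a:ℝ)*b), sq_nonneg ((a:ℝ)^2+(b:ℝ)^2),
    sq_nonneg ((a:ℝ)+(b:ℝ)), sq_nonneg ((a:ℝ)-(b:ℝ))]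
end

section
/- There exists a constant c > 0 such that for every k ∈ ℤ² there exists ℓ ∈ ℤ² with |ℓ| ≤ √2 and |⟨ℓ,k⟩| · |⟨ℓ,k⊥⟩| ≥ c·|k|². -/
/-!
For `k = (x, y)` the direction `ℓ = (1, 0)` gives the product `|x y|` and `ℓ = (1, 1)` gives
`|y² - x²|`. By the identity `(x² + y²)² = 4 (x y)² + (x² - y²)²` these cannot both be small
compared with `x² + y²`, so one of the two directions works with `c = 1/3`.
-/

lemma dotp_one_zero_mul_dotp_perp (k : ℤ × ℤ) :
    dotp (1, 0) k * dotp (1, 0) (perp k) = k.1 * k.2 := by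
  simp [dotp, perp]

lemma dotp_one_one_mul_dotp_perp (k : ℤ × ℤ) :
    dotp (1, 1) k * dotp (1, 1) (perp k) = k.2 ^ 2 - k.1 ^ 2 := by
  simp only [dotp, perp, Int.cast_one, Int.cast_neg]
  ring

lemma sq_add_sq_le_three_mul_abs_mul_or_abs_sq_sub_sq (x y : ℝ) :
    x ^ 2 + y ^ 2 ≤ 3 * |x * y| ∨ x ^ 2 + y ^ 2 ≤ 3 * |y ^ 2 - x ^ 2| := by
  by_contra! h
  obtain ⟨hxy, hsq⟩ := h
  have hpos : 0 < x ^ 2 + y ^ 2 := lt_of_le_of_lt (by positivity) hxy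
  have hsum : (x ^ 2 + y ^ 2) ^ 2 = 4 * |x * y| ^ 2 + |y ^ 2 - x ^ 2| ^ 2 := by
    rw [sq_abs, sq_abs]
    ring
  nlinarith [abs_nonneg (x * y), abs_nonneg (y ^ 2 - x ^ 2)]

/-- Key sub-claim of the geometric non-degeneracy lemma: there is `c > 0` such that for every
`k ∈ ℤ²` there exists `ℓ ∈ ℤ²` with `|ℓ| ≤ √2` and `|⟨ℓ,k⟩| · |⟨ℓ,k⊥⟩| ≥ c |k|²`. -/
theorem exists_nondegenerate_direction :
    ∃ c : ℝ, 0 < c ∧ ∀ k : ℤ × ℤ, ∃ ℓ : ℤ × ℤ,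
      nsq ℓ ≤ 2 ∧ c * nsq k ≤ |dotp ℓ k| * |dotp ℓ (perp k)| := by
  refine ⟨1 / 3, by norm_num, fun k => ?_⟩
  rcases sq_add_sq_le_three_mul_abs_mul_or_abs_sq_sub_sq (k.1 : ℝ) k.2 with h | h
  · refine ⟨(1, 0), by norm_num [nsq], ?_⟩
    rw [← abs_mul, dotp_one_zero_mul_dotp_perp, nsq]
    linarith
  · refine ⟨(1, 1), by norm_num [nsq], ?_⟩
    rw [← abs_mul, dotp_one_one_mul_dotp_perp, nsq]
    linarith
end

section
/- Let α > 1. There exist constants c, C > 0 depending only on α such that for every a : ℤ² → ℂ with a(0) = 0 one has, with all quantities valued in [0,∞]: c·∑_{ℓ∈ℤ²∖{0}} |ℓ|^{−2α}|a(ℓ)|² ≤ ∑_{k∈ℤ²∖{0}} |k|^{−2α} ( ∑_{ℓ∈ℤ²∖{0}} |ℓ|^{−2α}|a(ℓ−k)|² ) ≤ C·∑_{ℓ∈ℤ²∖{0}} |ℓ|^{−2α}|a(ℓ)|². -/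
open scoped ENNReal

lemma nsq_nonneg (k : ℤ × ℤ) : 0 ≤ nsq k := by unfold nsq; positivity

lemma one_le_nsq {k : ℤ × ℤ} (hk : k ≠ 0) : 1 ≤ nsq k := by
  have h : k.1 ≠ 0 ∨ k.2 ≠ 0 := by
    by_contra h; push_neg at h; exact hk (Prod.ext h.1 h.2)
  have h' : (1 : ℤ) ≤ k.1 ^ 2 + k.2 ^ 2 := by
    rcases h with h | h
    · have h1 : 0 < k.1 ^ 2 := by positivity
      have h2 : (0 : ℤ) ≤ k.2 ^ 2 := sq_nonneg _
      omega
    · have h1 : 0 < k.2 ^ 2 := by positivity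
      have h2 : (0 : ℤ) ≤ k.1 ^ 2 := sq_nonneg _
      omega
  have h2 : (1 : ℝ) ≤ (k.1 : ℝ) ^ 2 + (k.2 : ℝ) ^ 2 := by exact_mod_cast h'
  simpa [nsq] using h2

lemma nsq_pos {k : ℤ × ℤ} (hk : k ≠ 0) : 0 < nsq k :=
  lt_of_lt_of_le one_pos (one_le_nsq hk)

/-- Summability of the weight `|k|^{-2α}` on `ℤ² \ {0}` for `α > 1`. -/
lemma summable_w (α : ℝ) (hα : 1 < α) :
    Summable (fun k : ℤ × ℤ => if k ≠ 0 then (nsq k) ^ (-α) else 0) := by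
  have hα0 : 0 < α := lt_trans one_pos hα
  -- one-dimensional majorant
  set u : ℤ → ℝ := fun n => (1 + (n : ℝ) ^ 2) ^ (-(α / 2)) with hu_def
  have hu_nonneg : ∀ n, 0 ≤ u n := fun n => Real.rpow_nonneg (by positivity) _
  have hu : Summable u := by
    have hmaj : Summable (fun n : ℤ => (if n = 0 then (1 : ℝ) else 0) + |(n : ℝ)| ^ (-α)) :=
      ((hasSum_ite_eq (0 : ℤ) (1 : ℝ)).summable).add (Real.summable_abs_int_rpow hα)
    refine Summable.of_nonneg_of_le hu_nonneg (fun n => ?_) hmaj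
    by_cases hn : n = 0
    · simp only [hn, if_pos rfl]
      have : u (0 : ℤ) = 1 := by simp [hu_def]
      rw [this]
      have : |((0 : ℤ) : ℝ)| ^ (-α) = 0 := by
        rw [Int.cast_zero, abs_zero, Real.zero_rpow (by linarith)]
      rw [this]; norm_num
    · simp only [if_neg hn]
      have hn2 : (0 : ℝ) < (n : ℝ) ^ 2 := by
        have : ((n : ℤ) : ℝ) ≠ 0 := Int.cast_ne_zero.mpr hn
        positivity
      have h1 : u n ≤ ((n : ℝ) ^ 2) ^ (-(α / 2)) :=
        Real.rpow_le_rpow_of_nonpos hn2 (by linarith) (by linarith)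
      have h2 : ((n : ℝ) ^ 2) ^ (-(α / 2)) = |(n : ℝ)| ^ (-α) := by
        rw [← sq_abs, ← Real.rpow_natCast |(n : ℝ)| 2,
          ← Real.rpow_mul (abs_nonneg _)]
        congr 1
        push_cast
        ring
      rw [h2] at h1; linarith [h1]
  -- two-dimensional majorant
  have hprod : Summable (fun k : ℤ × ℤ => (2 : ℝ) ^ α * (u k.1 * u k.2)) :=
    (hu.mul_of_nonneg hu hu_nonneg hu_nonneg).mul_left _
  refine Summable.of_nonneg_of_le (fun k => ?_) (fun k => ?_) hprod
  · by_cases hk : k = 0 <;> simp [hk, Real.rpow_nonneg (nsq_nonneg _)]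
  by_cases hk : k = 0
  · simp only [hk, ne_eq, not_true_eq_false, if_false]
    exact mul_nonneg (Real.rpow_nonneg (by norm_num) _)
      (mul_nonneg (hu_nonneg _) (hu_nonneg _))
  simp only [if_pos hk]
  set x : ℝ := nsq k with hx_def
  have hx1 : 1 ≤ x := one_le_nsq hk
  have hx0 : 0 < x := by linarith
  have hprod_le : (1 + (k.1 : ℝ) ^ 2) * (1 + (k.2 : ℝ) ^ 2) ≤ 4 * x ^ 2 := by
    have hx_eq : x = (k.1 : ℝ) ^ 2 + (k.2 : ℝ) ^ 2 := rfl
    nlinarith [sq_nonneg ((k.1 : ℝ) ^ 2 - (k.2 : ℝ) ^ 2), sq_nonneg ((k.1 : ℝ) * (k.2 : ℝ)),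
      sq_nonneg (k.1 : ℝ), sq_nonneg (k.2 : ℝ)]
  have hmul : u k.1 * u k.2 = ((1 + (k.1 : ℝ) ^ 2) * (1 + (k.2 : ℝ) ^ 2)) ^ (-(α / 2)) := by
    rw [Real.mul_rpow (by positivity) (by positivity)]
  have hstep : (4 * x ^ 2) ^ (-(α / 2)) ≤ u k.1 * u k.2 := by
    rw [hmul]
    exact Real.rpow_le_rpow_of_nonpos (by positivity) hprod_le (by linarith)
  have hval : (4 * x ^ 2) ^ (-(α / 2)) = (2 : ℝ) ^ (-α) * x ^ (-α) := by
    rw [Real.mul_rpow (by norm_num) (by positivity)]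
    congr 1
    · rw [show (4 : ℝ) = 2 ^ (2 : ℕ) by norm_num, ← Real.rpow_natCast (2 : ℝ) 2,
        ← Real.rpow_mul (by norm_num)]
      congr 1
      push_cast
      ring
    · rw [← Real.rpow_natCast x 2, ← Real.rpow_mul hx0.le]
      congr 1
      push_cast
      ring
  have h2a : (2 : ℝ) ^ α * ((2 : ℝ) ^ (-α) * x ^ (-α)) = x ^ (-α) := by
    rw [← mul_assoc, ← Real.rpow_add (by norm_num : (0:ℝ) < 2)]
    simp
  calc x ^ (-α) = (2 : ℝ) ^ α * ((2 : ℝ) ^ (-α) * x ^ (-α)) := h2a.symm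
    _ = (2 : ℝ) ^ α * (4 * x ^ 2) ^ (-(α / 2)) := by rw [hval]
    _ ≤ (2 : ℝ) ^ α * (u k.1 * u k.2) := by
        have h2 : (0 : ℝ) ≤ (2 : ℝ) ^ α := Real.rpow_nonneg (by norm_num) _
        exact mul_le_mul_of_nonneg_left hstep h2

/-- Norm equivalence (Lemma 4.7): for `α > 1` there are `c, C > 0` such that for all Fourier
data `a : ℤ² → ℂ` with `a 0 = 0`, with all sums valued in `[0,∞]`,
`c ∑_{ℓ≠0} |ℓ|^{−2α}|a ℓ|² ≤ ∑_{k≠0} |k|^{−2α} ∑_{ℓ≠0} |ℓ|^{−2α} |a(ℓ−k)|²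
  ≤ C ∑_{ℓ≠0} |ℓ|^{−2α}|a ℓ|²`. -/
theorem norm_equivalence_modulated (α : ℝ) (hα : 1 < α) :
    ∃ c C : ℝ, 0 < c ∧ 0 < C ∧ ∀ a : ℤ × ℤ → ℂ, a 0 = 0 →
      (ENNReal.ofReal c *
          (∑' ℓ : ℤ × ℤ, if ℓ ≠ 0 then ENNReal.ofReal ((nsq ℓ) ^ (-α) * ‖a ℓ‖ ^ 2) else 0) ≤
        ∑' k : ℤ × ℤ,
          (if k ≠ 0 then
            ENNReal.ofReal ((nsq k) ^ (-α)) *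
              ∑' ℓ : ℤ × ℤ,
                (if ℓ ≠ 0 then ENNReal.ofReal ((nsq ℓ) ^ (-α) * ‖a (ℓ - k)‖ ^ 2) else 0)
          else 0)) ∧
      ((∑' k : ℤ × ℤ,
          (if k ≠ 0 then
            ENNReal.ofReal ((nsq k) ^ (-α)) *
              ∑' ℓ : ℤ × ℤ,
                (if ℓ ≠ 0 then ENNReal.ofReal ((nsq ℓ) ^ (-α) * ‖a (ℓ - k)‖ ^ 2) else 0)
          else 0)) ≤
        ENNReal.ofReal C *
          ∑' ℓ : ℤ × ℤ, if ℓ ≠ 0 then ENNReal.ofReal ((nsq ℓ) ^ (-α) * ‖a ℓ‖ ^ 2) else 0) := by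
  classical
  have hα0 : 0 < α := lt_trans one_pos hα
  -- real weight and its sum
  set g : ℤ × ℤ → ℝ := fun k => if k ≠ 0 then (nsq k) ^ (-α) else 0 with hg_def
  have hg_nonneg : ∀ k, 0 ≤ g k := by
    intro k; by_cases hk : k = 0 <;> simp [hg_def, hk, Real.rpow_nonneg (nsq_nonneg _)]
  have hgsum : Summable g := summable_w α hα
  set B : ℝ := ∑' k, g k with hB_def
  have hB_pos : 0 < B := by
    refine Summable.tsum_pos hgsum hg_nonneg ((1, 0) : ℤ × ℤ) ?_
    have h10 : ((1, 0) : ℤ × ℤ) ≠ 0 := by simp [Prod.ext_iff]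
    have : nsq ((1, 0) : ℤ × ℤ) = 1 := by simp [nsq]
    simp [hg_def, h10, this]
  -- the ENNReal weight
  set W : ℤ × ℤ → ℝ≥0∞ := fun k => if k ≠ 0 then ENNReal.ofReal ((nsq k) ^ (-α)) else 0
    with hW_def
  have hWg : ∀ k, W k = ENNReal.ofReal (g k) := by
    intro k; by_cases hk : k = 0 <;> simp [hW_def, hg_def, hk]
  have hA : ∑' k, W k = ENNReal.ofReal B := by
    rw [hB_def, ENNReal.ofReal_tsum_of_nonneg hg_nonneg hgsum]
    exact tsum_congr hWg
  -- constants
  refine ⟨(144 : ℝ) ^ (-α), (4 : ℝ) ^ α * (2 * B), Real.rpow_pos_of_pos (by norm_num) _,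
    mul_pos (Real.rpow_pos_of_pos (by norm_num) _) (by linarith), ?_⟩
  intro a ha
  set b : ℤ × ℤ → ℝ≥0∞ := fun m => ENNReal.ofReal (‖a m‖ ^ 2) with hb_def
  have hb0 : b 0 = 0 := by simp [hb_def, ha]
  set F : ℤ × ℤ → ℝ≥0∞ := fun m => ∑' k, W k * W (m + k) with hF_def
  -- rewrite the target sum T
  have hTeq : (∑' ℓ : ℤ × ℤ, if ℓ ≠ 0 then ENNReal.ofReal ((nsq ℓ) ^ (-α) * ‖a ℓ‖ ^ 2) else 0)
      = ∑' m, W m * b m := by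
    refine tsum_congr fun ℓ => ?_
    by_cases hl : ℓ = 0
    · simp [hl, hW_def]
    · simp [hl, hW_def, hb_def,
        ENNReal.ofReal_mul (Real.rpow_nonneg (nsq_nonneg ℓ) (-α))]
  -- rewrite the double sum S
  have hSeq : (∑' k : ℤ × ℤ,
        (if k ≠ 0 then
          ENNReal.ofReal ((nsq k) ^ (-α)) *
            ∑' ℓ : ℤ × ℤ,
              (if ℓ ≠ 0 then ENNReal.ofReal ((nsq ℓ) ^ (-α) * ‖a (ℓ - k)‖ ^ 2) else 0)
        else 0)) = ∑' m, F m * b m := by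
    have hstep1 : ∀ k : ℤ × ℤ,
        (if k ≠ 0 then
          ENNReal.ofReal ((nsq k) ^ (-α)) *
            ∑' ℓ : ℤ × ℤ,
              (if ℓ ≠ 0 then ENNReal.ofReal ((nsq ℓ) ^ (-α) * ‖a (ℓ - k)‖ ^ 2) else 0)
        else 0) = W k * ∑' m, W (m + k) * b m := by
      intro k
      have hinner : (∑' ℓ : ℤ × ℤ,
          (if ℓ ≠ 0 then ENNReal.ofReal ((nsq ℓ) ^ (-α) * ‖a (ℓ - k)‖ ^ 2) else 0))
          = ∑' ℓ, W ℓ * b (ℓ - k) := by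
        refine tsum_congr fun ℓ => ?_
        by_cases hl : ℓ = 0
        · simp [hl, hW_def]
        · simp [hl, hW_def, hb_def,
            ENNReal.ofReal_mul (Real.rpow_nonneg (nsq_nonneg ℓ) (-α))]
      have hre : (∑' ℓ, W ℓ * b (ℓ - k)) = ∑' m, W (m + k) * b m := by
        rw [← (Equiv.addRight k).tsum_eq (fun ℓ => W ℓ * b (ℓ - k))]
        refine tsum_congr fun m => ?_
        simp [Equiv.addRight]
      by_cases hk : k = 0
      · simp [hk, hW_def]
      · simp only [if_pos hk]
        rw [hinner, hre]
        congr 1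
        simp [hW_def, hk]
    calc (∑' k : ℤ × ℤ,
        (if k ≠ 0 then
          ENNReal.ofReal ((nsq k) ^ (-α)) *
            ∑' ℓ : ℤ × ℤ,
              (if ℓ ≠ 0 then ENNReal.ofReal ((nsq ℓ) ^ (-α) * ‖a (ℓ - k)‖ ^ 2) else 0)
        else 0))
        = ∑' k, W k * ∑' m, W (m + k) * b m := tsum_congr hstep1
      _ = ∑' k, ∑' m, W k * (W (m + k) * b m) := by
          refine tsum_congr fun k => ?_
          rw [ENNReal.tsum_mul_left]
      _ = ∑' m, ∑' k, W k * (W (m + k) * b m) := ENNReal.tsum_comm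
      _ = ∑' m, F m * b m := by
          refine tsum_congr fun m => ?_
          rw [hF_def]
          rw [← ENNReal.tsum_mul_right]
          exact tsum_congr fun k => by ring
  rw [hTeq, hSeq]
  -- pointwise lower bound
  have hlow : ∀ m : ℤ × ℤ, ENNReal.ofReal ((144 : ℝ) ^ (-α)) * (W m * b m) ≤ F m * b m := by
    intro m
    by_cases hm : m = 0
    · simp [hm, hW_def]
    · have hkey : ENNReal.ofReal ((144 : ℝ) ^ (-α)) * W m ≤ F m := by
        obtain ⟨k0, hk0, hmk0, hn4, hn36⟩ : ∃ k0 : ℤ × ℤ, k0 ≠ 0 ∧ m + k0 ≠ 0 ∧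
            nsq k0 ≤ 4 ∧ nsq (m + k0) ≤ 36 * nsq m := by
          by_cases hcase : m = ((-1 : ℤ), (0 : ℤ))
          · refine ⟨(2, 0), by simp [Prod.ext_iff], ?_, ?_, ?_⟩
            · rw [hcase]; simp [Prod.ext_iff]
            · norm_num [nsq]
            · rw [hcase]
              norm_num [nsq, Prod.ext_iff]
          · refine ⟨(1, 0), by simp [Prod.ext_iff], ?_, by norm_num [nsq], ?_⟩
            · intro h
              apply hcase
              have h1 : m.1 + 1 = 0 := congrArg Prod.fst h
              have h2 : m.2 + 0 = 0 := congrArg Prod.snd h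
              exact Prod.ext (by omega) (by omega)
            · have h1 : (m.1 : ℝ) ≤ (m.1 : ℝ) ^ 2 := by
                exact_mod_cast Int.le_self_sq m.1
              have h2 : (1 : ℝ) ≤ (m.1 : ℝ) ^ 2 + (m.2 : ℝ) ^ 2 := one_le_nsq hm
              show ((m + (1, 0)).1 : ℝ) ^ 2 + ((m + (1, 0)).2 : ℝ) ^ 2
                  ≤ 36 * ((m.1 : ℝ) ^ 2 + (m.2 : ℝ) ^ 2)
              have e1 : (m + ((1 : ℤ), (0 : ℤ))).1 = m.1 + 1 := rfl
              have e2 : (m + ((1 : ℤ), (0 : ℤ))).2 = m.2 + 0 := rfl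
              rw [e1, e2]
              push_cast
              nlinarith
        have hpos0 : (0 : ℝ) < nsq k0 := nsq_pos hk0
        have hposm : (0 : ℝ) < nsq m := nsq_pos hm
        have hposmk : (0 : ℝ) < nsq (m + k0) := nsq_pos hmk0
        have hr1 : (4 : ℝ) ^ (-α) ≤ (nsq k0) ^ (-α) :=
          Real.rpow_le_rpow_of_nonpos hpos0 hn4 (by linarith)
        have hr2 : (36 * nsq m) ^ (-α) ≤ (nsq (m + k0)) ^ (-α) :=
          Real.rpow_le_rpow_of_nonpos hposmk hn36 (by linarith)
        have hsplit : (144 : ℝ) ^ (-α) * (nsq m) ^ (-α)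
            = (4 : ℝ) ^ (-α) * ((36 * nsq m) ^ (-α)) := by
          rw [Real.mul_rpow (by norm_num) hposm.le,
            show (144 : ℝ) = 4 * 36 by norm_num,
            Real.mul_rpow (by norm_num) (by norm_num)]
          ring
        have hreal : (144 : ℝ) ^ (-α) * (nsq m) ^ (-α)
            ≤ (nsq k0) ^ (-α) * (nsq (m + k0)) ^ (-α) := by
          rw [hsplit]
          exact mul_le_mul hr1 hr2 (Real.rpow_nonneg (by positivity) _)
            (Real.rpow_nonneg hpos0.le _)
        have hWm : W m = ENNReal.ofReal ((nsq m) ^ (-α)) := by simp [hW_def, hm]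
        have hterm : ENNReal.ofReal ((144 : ℝ) ^ (-α)) * W m ≤ W k0 * W (m + k0) := by
          rw [hWm, ← ENNReal.ofReal_mul (Real.rpow_nonneg (by norm_num) _)]
          have : W k0 * W (m + k0)
              = ENNReal.ofReal ((nsq k0) ^ (-α) * (nsq (m + k0)) ^ (-α)) := by
            simp [hW_def, hk0, hmk0,
              ENNReal.ofReal_mul (Real.rpow_nonneg (nsq_nonneg k0) (-α))]
          rw [this]
          exact ENNReal.ofReal_le_ofReal hreal
        exact le_trans hterm (ENNReal.le_tsum k0)
      calc ENNReal.ofReal ((144 : ℝ) ^ (-α)) * (W m * b m)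
          = (ENNReal.ofReal ((144 : ℝ) ^ (-α)) * W m) * b m := by ring
        _ ≤ F m * b m := mul_le_mul_left hkey _
  -- pointwise upper bound
  have hup : ∀ m : ℤ × ℤ,
      F m * b m ≤ ENNReal.ofReal ((4 : ℝ) ^ α * (2 * B)) * (W m * b m) := by
    intro m
    by_cases hm : m = 0
    · simp [hm, hb0]
    · have hterm2 : ∀ k, W k * W (m + k)
          ≤ ENNReal.ofReal ((4 : ℝ) ^ α) * W m * (W k + W (m + k)) := by
        intro k
        by_cases hk : k = 0
        · simp [hk, hW_def]
        by_cases hmk : m + k = 0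
        · simp [hmk, hW_def]
        have hposm : (0 : ℝ) < nsq m := nsq_pos hm
        have hposk : (0 : ℝ) < nsq k := nsq_pos hk
        have hposmk : (0 : ℝ) < nsq (m + k) := nsq_pos hmk
        have hsum2 : nsq m ≤ 2 * (nsq k + nsq (m + k)) := by
          have e1 : (m + k).1 = m.1 + k.1 := rfl
          have e2 : (m + k).2 = m.2 + k.2 := rfl
          show (m.1 : ℝ) ^ 2 + (m.2 : ℝ) ^ 2 ≤ 2 * (((k.1 : ℝ) ^ 2 + (k.2 : ℝ) ^ 2)
            + (((m + k).1 : ℝ) ^ 2 + ((m + k).2 : ℝ) ^ 2))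
          rw [e1, e2]
          push_cast
          nlinarith [sq_nonneg ((m.1 : ℝ) + 2 * (k.1 : ℝ)), sq_nonneg ((m.2 : ℝ) + 2 * (k.2 : ℝ))]
        have hWm : W m = ENNReal.ofReal ((nsq m) ^ (-α)) := by simp [hW_def, hm]
        have key4 : ∀ x : ℝ, 0 < x → nsq m ≤ 4 * x →
            ENNReal.ofReal (x ^ (-α)) ≤ ENNReal.ofReal ((4 : ℝ) ^ α) * W m := by
          intro x hx h4x
          have hdiv : nsq m / 4 ≤ x := by linarith
          have hr : x ^ (-α) ≤ (nsq m / 4) ^ (-α) :=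
            Real.rpow_le_rpow_of_nonpos (by linarith) hdiv (by linarith)
          have h44 : (4 : ℝ) ^ α * (4 : ℝ) ^ (-α) = 1 := by
            rw [← Real.rpow_add (by norm_num : (0:ℝ) < 4)]
            norm_num
          have heq : (nsq m / 4) ^ (-α) = (4 : ℝ) ^ α * (nsq m) ^ (-α) := by
            rw [Real.div_rpow hposm.le (by norm_num),
              div_eq_iff (ne_of_gt (Real.rpow_pos_of_pos (by norm_num) (-α))),
              mul_assoc, mul_comm ((nsq m) ^ (-α)) ((4 : ℝ) ^ (-α)), ← mul_assoc, h44, one_mul]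
          rw [hWm, ← ENNReal.ofReal_mul (Real.rpow_nonneg (by norm_num) _)]
          apply ENNReal.ofReal_le_ofReal
          rw [← heq]; exact hr
        rcases le_total (nsq k) (nsq (m + k)) with h | h
        · have h4 : nsq m ≤ 4 * nsq (m + k) := by linarith
          have hWmk : W (m + k) = ENNReal.ofReal ((nsq (m + k)) ^ (-α)) := by
            simp [hW_def, hmk]
          have hb1 : W (m + k) ≤ ENNReal.ofReal ((4 : ℝ) ^ α) * W m := by
            rw [hWmk]; exact key4 _ hposmk h4
          calc W k * W (m + k) ≤ W k * (ENNReal.ofReal ((4 : ℝ) ^ α) * W m) :=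
                mul_le_mul_right hb1 _
            _ = ENNReal.ofReal ((4 : ℝ) ^ α) * W m * W k := by ring
            _ ≤ ENNReal.ofReal ((4 : ℝ) ^ α) * W m * (W k + W (m + k)) :=
                mul_le_mul_right le_self_add _
        · have h4 : nsq m ≤ 4 * nsq k := by linarith
          have hWk : W k = ENNReal.ofReal ((nsq k) ^ (-α)) := by simp [hW_def, hk]
          have hb1 : W k ≤ ENNReal.ofReal ((4 : ℝ) ^ α) * W m := by
            rw [hWk]; exact key4 _ hposk h4
          calc W k * W (m + k) ≤ (ENNReal.ofReal ((4 : ℝ) ^ α) * W m) * W (m + k) :=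
                mul_le_mul_left hb1 _
            _ ≤ ENNReal.ofReal ((4 : ℝ) ^ α) * W m * (W k + W (m + k)) :=
                mul_le_mul_right le_add_self _
      have hshift : (∑' k, W (m + k)) = ∑' k, W k := (Equiv.addLeft m).tsum_eq W
      have hFle : F m ≤ ENNReal.ofReal ((4 : ℝ) ^ α) * W m * (∑' k, (W k + W (m + k))) := by
        rw [hF_def, ← ENNReal.tsum_mul_left]
        exact ENNReal.tsum_le_tsum hterm2
      have hsum' : (∑' k, (W k + W (m + k))) = ENNReal.ofReal (2 * B) := by
        rw [ENNReal.tsum_add, hshift, hA, ← ENNReal.ofReal_add hB_pos.le hB_pos.le]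
        norm_num [two_mul]
      have hkey : F m ≤ ENNReal.ofReal ((4 : ℝ) ^ α * (2 * B)) * W m := by
        rw [ENNReal.ofReal_mul (Real.rpow_nonneg (by norm_num) _)]
        calc F m ≤ ENNReal.ofReal ((4 : ℝ) ^ α) * W m * (∑' k, (W k + W (m + k))) := hFle
          _ = ENNReal.ofReal ((4 : ℝ) ^ α) * ENNReal.ofReal (2 * B) * W m := by
              rw [hsum']; ring
      calc F m * b m ≤ (ENNReal.ofReal ((4 : ℝ) ^ α * (2 * B)) * W m) * b m :=
            mul_le_mul_left hkey _
        _ = ENNReal.ofReal ((4 : ℝ) ^ α * (2 * B)) * (W m * b m) := by ring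
  constructor
  · calc ENNReal.ofReal ((144 : ℝ) ^ (-α)) * ∑' m, W m * b m
        = ∑' m, ENNReal.ofReal ((144 : ℝ) ^ (-α)) * (W m * b m) := ENNReal.tsum_mul_left.symm
      _ ≤ ∑' m, F m * b m := ENNReal.tsum_le_tsum hlow
  · calc (∑' m, F m * b m)
        ≤ ∑' m, ENNReal.ofReal ((4 : ℝ) ^ α * (2 * B)) * (W m * b m) :=
          ENNReal.tsum_le_tsum hup
      _ = ENNReal.ofReal ((4 : ℝ) ^ α * (2 * B)) * ∑' m, W m * b m := ENNReal.tsum_mul_left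
end

section
/- Fix a real 𝔞 > 10 and β ≥ 1, and set λ = 𝔞/2 + 5. There exists a constant c > 0 (depending only on 𝔞 and β) such that for every κ ∈ (0,1], every square-summable a : ℤ² → ℂ with a(0) = 0 that is not identically zero, and every integer M ≥ max(2, M^{(β)}(a)), setting T = λ κ^{−1} M^{−2} log M, one has: ∑_{ℓ∈ℤ², 0<|ℓ|≤1} ∑_{k∈ℤ²∖{0}, k≠ℓ} ⟨ℓ,k⊥⟩² · |a(ℓ−k)|² · |k|^{−(𝔞+2)} · ∫₀ᵀ ( ∫ₛᵀ e^{−κ|ℓ|²(T−r)} e^{−κ|ℓ−k|² r} e^{−|k|²(r−s)} dr )² ds ≥ c κ^{−1} M^{−6} ∑_{m∈ℤ²∖{0}} |m|^{−𝔞} |a(m)|². -/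
open scoped ENNReal
open MeasureTheory intervalIntegral

/-- The spectral `β`-quantile `M^{(β)}(a)`: the least `N ∈ ℕ`, `N ≥ 1`, such that
`∑_{|k|>N} |a k|² ≤ β² ∑_{0<|k|≤N} |a k|²`. -/
noncomputable def specQuantile (β : ℝ) (a : ℤ × ℤ → ℂ) : ℕ :=
  sInf {N : ℕ | 1 ≤ N ∧
    (∑' k : ℤ × ℤ, if (N : ℝ) ^ 2 < nsq k then ‖a k‖ ^ 2 else 0) ≤
      β ^ 2 * ∑' k : ℤ × ℤ, if k ≠ 0 ∧ nsq k ≤ (N : ℝ) ^ 2 then ‖a k‖ ^ 2 else 0}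


open Filter Topology

/-!
Each mode `m ≠ 0` with `|m| ≤ M` is fed by a single term of the double sum: taking for `ℓ` the
unit vector along the smaller coordinate of `m` and `k = ℓ - m`, one has `a (ℓ - k) = a m`,
`⟨ℓ, k⊥⟩² ≥ |m|² / 2` and `|k|² ≤ 4 |m|²`. Restricting the time integral to `s ≤ (2κM²)⁻¹` and
`r - s ≤ (8M²)⁻¹` keeps the integrand above `e^{-(λ+2)}`, so this term is
`≳ κ⁻¹ M⁻⁶ |m|^{-𝔞} |a m|²`, and distinct `m` use distinct pairs `(ℓ, k)`.
The modes `|m| > M` carry weighted mass at most `M^{-𝔞} β² ∑_{0<|k|≤M} |a k|²`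
by the quantile condition, hence at most `β²` times that of the modes `|m| ≤ M`.
-/

lemma le_intervalIntegral_of_le_on {f : ℝ → ℝ} {a b c E : ℝ} (hab : a ≤ b) (hbc : b ≤ c)
    (hf : IntervalIntegrable f volume a c) (hf0 : ∀ x ∈ Set.Icc a c, 0 ≤ f x)
    (hE : ∀ x ∈ Set.Icc a b, E ≤ f x) :
    (b - a) * E ≤ ∫ x in a..c, f x := by
  have hsub : Set.uIcc a b ⊆ Set.uIcc a c := by
    rw [Set.uIcc_of_le hab, Set.uIcc_of_le (hab.trans hbc)]
    exact Set.Icc_subset_Icc_right hbc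
  calc (b - a) * E = ∫ _ in a..b, E := by simp
    _ ≤ ∫ x in a..b, f x := integral_mono_on hab intervalIntegrable_const (hf.mono_set hsub) hE
    _ ≤ ∫ x in a..c, f x := by
      refine integral_mono_interval le_rfl hab hbc ?_ hf
      filter_upwards [ae_restrict_mem measurableSet_Ioc] with x hx
      exact hf0 x (Set.Ioc_subset_Icc_self hx)

lemma continuous_parametric_intervalIntegral_lowerLimit {G : ℝ → ℝ → ℝ}
    (hG : Continuous G.uncurry) (T : ℝ) : Continuous fun s => ∫ r in s..T, G s r := by
  simp_rw [integral_symm T]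
  exact (continuous_parametric_intervalIntegral_of_continuous hG continuous_id).neg

noncomputable def timeIntegral (κ T p q c : ℝ) : ℝ :=
  ∫ s in (0 : ℝ)..T,
    (∫ r in s..T, Real.exp (-κ * p * (T - r)) * Real.exp (-κ * q * r) *
      Real.exp (-c * (r - s))) ^ 2

lemma timeIntegral_ge {κ T B Λ p q c : ℝ} (hκ0 : 0 < κ) (hκ1 : κ ≤ 1) (hB : 0 < B)
    (hp : p ≤ 1) (hq : q ≤ B) (hc : c ≤ 4 * B) (hT : (κ * B)⁻¹ ≤ T) (hκT : κ * T ≤ Λ) :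
    Real.exp (-(2 * Λ + 4)) / 128 / (κ * B ^ 3) ≤ timeIntegral κ T p q c := by
  set G : ℝ → ℝ → ℝ := fun s r =>
    Real.exp (-κ * p * (T - r)) * Real.exp (-κ * q * r) * Real.exp (-c * (r - s))
  set s₀ := (2 * κ * B)⁻¹
  set δ := (8 * B)⁻¹
  set E := Real.exp (-(Λ + 2))
  have hs₀ : κ * B * (2 * s₀) = 1 := by simp only [s₀]; field_simp
  have hδ : 4 * B * δ = 1 / 2 := by simp only [δ]; field_simp; norm_num
  have hδ0 : 0 < δ := by positivity
  have hδs₀ : δ ≤ s₀ := inv_anti₀ (by positivity) (by nlinarith)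
  have hs₀T : s₀ + δ ≤ T := by
    have : 2 * s₀ = (κ * B)⁻¹ := by simp only [s₀]; field_simp
    linarith
  -- on `[0, s₀] × [s, s + δ]` the three exponents are at most `Λ`, `1` and `1/2`
  have hG : ∀ s ∈ Set.Icc 0 s₀, ∀ r ∈ Set.Icc s (s + δ), E ≤ G s r := by
    rintro s ⟨hs0, hs⟩ r ⟨hsr, hr⟩
    simp only [G, E, ← Real.exp_add, Real.exp_le_exp]
    have h1 : κ * p * (T - r) ≤ Λ := by
      nlinarith [mul_nonneg (mul_nonneg hκ0.le (sub_nonneg.2 hp)) (by linarith : 0 ≤ T - r)]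
    have h2 : κ * q * r ≤ 1 := by
      nlinarith [mul_le_mul_of_nonneg_right (mul_le_mul_of_nonneg_left hq hκ0.le)
        (by linarith : 0 ≤ r), mul_le_mul_of_nonneg_left (by linarith : r ≤ 2 * s₀)
        (by positivity : 0 ≤ κ * B)]
    have h3 : c * (r - s) ≤ 1 / 2 := by nlinarith
    nlinarith
  have hGc : Continuous G.uncurry := by simp only [G, Function.uncurry_def]; fun_prop
  have hinner : ∀ s ∈ Set.Icc 0 s₀, δ * E ≤ ∫ r in s..T, G s r := by
    intro s hs
    have := le_intervalIntegral_of_le_on (f := G s) (b := s + δ) (c := T)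
      (by linarith) (by linarith [hs.2]) ((hGc.uncurry_left s).intervalIntegrable _ _)
      (fun r _ => by positivity) (hG s hs)
    rwa [add_sub_cancel_left] at this
  have houter := le_intervalIntegral_of_le_on (E := (δ * E) ^ 2) (b := s₀) (c := T)
    (by positivity) (by linarith)
    (((continuous_parametric_intervalIntegral_lowerLimit hGc T).pow 2).intervalIntegrable 0 T)
    (fun s _ => sq_nonneg _) (fun s hs => pow_le_pow_left₀ (by positivity) (hinner s hs) 2)
  have hE : E ^ 2 = Real.exp (-(2 * Λ + 4)) := by rw [sq, ← Real.exp_add]; ring_nf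
  calc Real.exp (-(2 * Λ + 4)) / 128 / (κ * B ^ 3) = (s₀ - 0) * (δ * E) ^ 2 := by
        rw [sub_zero, mul_pow, hE]
        simp only [s₀, δ]
        field_simp
        ring
    _ ≤ timeIntegral κ T p q c := houter

lemma one_le_nsq_s7 {m : ℤ × ℤ} (hm : m ≠ 0) : 1 ≤ nsq m := by
  have h : (1 : ℤ) ≤ m.1 ^ 2 + m.2 ^ 2 := by
    by_contra! h
    have h1 : m.1 ^ 2 = 0 := by nlinarith [sq_nonneg m.1, sq_nonneg m.2]
    have h2 : m.2 ^ 2 = 0 := by nlinarith [sq_nonneg m.1, sq_nonneg m.2]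
    exact hm (Prod.ext (by simpa using h1) (by simpa using h2))
  unfold nsq
  exact_mod_cast h

lemma nsq_sub_le (k l : ℤ × ℤ) : nsq (k - l) ≤ 2 * (nsq k + nsq l) := by
  simp only [nsq, Prod.fst_sub, Prod.snd_sub, Int.cast_sub]
  nlinarith [sq_nonneg ((k.1 : ℝ) + l.1), sq_nonneg ((k.2 : ℝ) + l.2)]

def transverseUnit (m : ℤ × ℤ) : ℤ × ℤ := if m.2 ^ 2 ≤ m.1 ^ 2 then (0, 1) else (1, 0)

lemma nsq_transverseUnit (m : ℤ × ℤ) : nsq (transverseUnit m) = 1 := by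
  unfold transverseUnit; split_ifs <;> simp [nsq]

lemma nsq_le_two_mul_dotp_perp_sq (m : ℤ × ℤ) :
    nsq m ≤ 2 * dotp (transverseUnit m) (perp (transverseUnit m - m)) ^ 2 := by
  unfold transverseUnit
  split_ifs with h
  · have h' : (m.2 : ℝ) ^ 2 ≤ (m.1 : ℝ) ^ 2 := by exact_mod_cast h
    simp only [nsq, dotp, perp, Prod.fst_sub, Prod.snd_sub]
    push_cast
    nlinarith
  · have h' : (m.1 : ℝ) ^ 2 ≤ (m.2 : ℝ) ^ 2 := by exact_mod_cast (not_le.1 h).le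
    simp only [nsq, dotp, perp, Prod.fst_sub, Prod.snd_sub]
    push_cast
    nlinarith

lemma transverseUnit_sub_ne_zero {m : ℤ × ℤ} (hm : m ≠ 0) : transverseUnit m - m ≠ 0 := by
  intro h
  have := nsq_le_two_mul_dotp_perp_sq m
  rw [h] at this
  simp [dotp, perp] at this
  linarith [one_le_nsq_s7 hm]

lemma injective_transverseUnit_pair :
    Function.Injective fun m : ℤ × ℤ => (transverseUnit m, transverseUnit m - m) :=
  Function.LeftInverse.injective (g := fun p => p.1 - p.2) fun _ => sub_sub_cancel _ _

lemma four_rpow_div_two_mul_rpow_le {x y d 𝔞 : ℝ} (hx : 0 < x) (hy : 0 < y) (hyx : y ≤ 4 * x)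
    (hd : x ≤ 2 * d ^ 2) (h𝔞 : -2 ≤ 𝔞) :
    (4 : ℝ) ^ (-((𝔞 + 2) / 2)) / 2 * x ^ (-(𝔞 / 2)) ≤ d ^ 2 * y ^ (-((𝔞 + 2) / 2)) := by
  have h4x : (4 * x) ^ (-((𝔞 + 2) / 2)) =
      (4 : ℝ) ^ (-((𝔞 + 2) / 2)) * (x ^ (-(𝔞 / 2)) * x⁻¹) := by
    rw [Real.mul_rpow (by norm_num) hx.le, show -((𝔞 + 2) / 2) = -(𝔞 / 2) + -1 by ring,
      Real.rpow_add hx, Real.rpow_neg_one]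
  calc (4 : ℝ) ^ (-((𝔞 + 2) / 2)) / 2 * x ^ (-(𝔞 / 2))
        = x / 2 * (4 * x) ^ (-((𝔞 + 2) / 2)) := by rw [h4x]; field_simp
    _ ≤ d ^ 2 * y ^ (-((𝔞 + 2) / 2)) :=
        mul_le_mul (by linarith) (Real.rpow_le_rpow_of_nonpos hy hyx (by linarith))
          (by positivity) (sq_nonneg d)

lemma summable_ite_of_nonneg {α : Type*} {f : α → ℝ} (hf : Summable f) (h0 : ∀ x, 0 ≤ f x)
    (P : α → Prop) [DecidablePred P] : Summable fun x => if P x then f x else 0 :=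
  hf.of_nonneg_of_le (fun x => by split_ifs <;> simp [h0]) (fun x => by split_ifs <;> simp [h0])

lemma ENNReal.ofReal_tsum_ite {α : Type*} {f : α → ℝ} (hf : Summable f) (h0 : ∀ x, 0 ≤ f x)
    (P : α → Prop) [DecidablePred P] :
    ENNReal.ofReal (∑' x, if P x then f x else 0) =
      ∑' x, if P x then ENNReal.ofReal (f x) else 0 := by
  rw [ENNReal.ofReal_tsum_of_nonneg (fun x => by split_ifs <;> simp [h0])
    (summable_ite_of_nonneg hf h0 P)]
  congr with x
  split_ifs <;> simp

noncomputable def tailMass (a : ℤ × ℤ → ℂ) (R : ℝ) : ℝ :=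
  ∑' k : ℤ × ℤ, if R < nsq k then ‖a k‖ ^ 2 else 0

noncomputable def headMass (a : ℤ × ℤ → ℂ) (R : ℝ) : ℝ :=
  ∑' k : ℤ × ℤ, if k ≠ 0 ∧ nsq k ≤ R then ‖a k‖ ^ 2 else 0

section Quantile

variable {a : ℤ × ℤ → ℂ}

lemma summable_ite_norm_sq (hsum : Summable fun k => ‖a k‖ ^ 2) (P : ℤ × ℤ → Prop)
    [DecidablePred P] : Summable fun k => if P k then ‖a k‖ ^ 2 else 0 :=
  summable_ite_of_nonneg hsum (fun _ => by positivity) P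

lemma tailMass_anti (hsum : Summable fun k => ‖a k‖ ^ 2) {R R' : ℝ} (h : R ≤ R') :
    tailMass a R' ≤ tailMass a R :=
  (summable_ite_norm_sq hsum _).tsum_le_tsum
    (fun k => by split_ifs <;> first | positivity | linarith) (summable_ite_norm_sq hsum _)

lemma headMass_mono (hsum : Summable fun k => ‖a k‖ ^ 2) {R R' : ℝ} (h : R ≤ R') :
    headMass a R ≤ headMass a R' :=
  (summable_ite_norm_sq hsum _).tsum_le_tsum
    (fun k => by
      split_ifs with h1 h2 <;> first | positivity | rfl | exact absurd ⟨h1.1, h1.2.trans h⟩ h2)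
    (summable_ite_norm_sq hsum _)

lemma tendsto_tailMass (hsum : Summable fun k => ‖a k‖ ^ 2) :
    Tendsto (tailMass a) atTop (𝓝 0) := by
  have := tendsto_tsum_of_dominated_convergence (𝓕 := atTop) (g := fun _ => (0 : ℝ)) hsum
    (f := fun R k => if R < nsq k then ‖a k‖ ^ 2 else 0)
    (fun k => tendsto_const_nhds.congr' <| (eventually_ge_atTop (nsq k)).mono fun R hR => by
      simp [not_lt.2 hR])
    (Eventually.of_forall fun R k => by split_ifs <;> simp)
  rwa [tsum_zero] at this

lemma tendsto_headMass (hsum : Summable fun k => ‖a k‖ ^ 2) (ha0 : a 0 = 0) :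
    Tendsto (headMass a) atTop (𝓝 (∑' k, ‖a k‖ ^ 2)) :=
  tendsto_tsum_of_dominated_convergence hsum
    (fun k => tendsto_const_nhds.congr' <| (eventually_ge_atTop (nsq k)).mono fun R hR => by
      rcases eq_or_ne k 0 with rfl | hk
      · simp [ha0]
      · simp [hk, hR])
    (Eventually.of_forall fun R k => by split_ifs <;> simp)

lemma exists_tailMass_le (hsum : Summable fun k => ‖a k‖ ^ 2) (ha0 : a 0 = 0) (hane : a ≠ 0)
    {β : ℝ} (hβ : β ≠ 0) :
    ∃ N : ℕ, 1 ≤ N ∧ tailMass a (N ^ 2) ≤ β ^ 2 * headMass a (N ^ 2) := by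
  obtain ⟨m, hm⟩ := Function.ne_iff.1 hane
  have hpos : 0 < β ^ 2 * ∑' k, ‖a k‖ ^ 2 :=
    mul_pos (by positivity) (hsum.tsum_pos (fun _ => by positivity) m (by positivity))
  have hlt := (tendsto_tailMass hsum).eventually_lt
    ((tendsto_headMass hsum ha0).const_mul (β ^ 2)) hpos
  have hsq : Tendsto (fun N : ℕ => (N : ℝ) ^ 2) atTop atTop :=
    (tendsto_pow_atTop two_ne_zero).comp tendsto_natCast_atTop_atTop
  obtain ⟨N, hN, hN1⟩ := ((hsq.eventually hlt).and (eventually_ge_atTop 1)).exists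
  exact ⟨N, hN1, hN.le⟩

lemma tailMass_le_of_specQuantile_le (hsum : Summable fun k => ‖a k‖ ^ 2) (ha0 : a 0 = 0)
    (hane : a ≠ 0) {β : ℝ} (hβ : β ≠ 0) {M : ℕ} (hM : specQuantile β a ≤ M) :
    tailMass a (M ^ 2) ≤ β ^ 2 * headMass a (M ^ 2) := by
  obtain ⟨-, hq⟩ : specQuantile β a ∈
      {N : ℕ | 1 ≤ N ∧ tailMass a (N ^ 2) ≤ β ^ 2 * headMass a (N ^ 2)} :=
    Nat.sInf_mem (exists_tailMass_le hsum ha0 hane hβ)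
  have hNM : ((specQuantile β a : ℕ) : ℝ) ^ 2 ≤ (M : ℝ) ^ 2 := by gcongr
  calc tailMass a (M ^ 2) ≤ tailMass a (specQuantile β a ^ 2) := tailMass_anti hsum hNM
    _ ≤ β ^ 2 * headMass a (specQuantile β a ^ 2) := hq
    _ ≤ β ^ 2 * headMass a (M ^ 2) := by gcongr; exact headMass_mono hsum hNM

lemma tsum_tail_le_ofReal_mul_head (hsum : Summable fun k => ‖a k‖ ^ 2) (ha0 : a 0 = 0)
    {β B : ℝ} (h : tailMass a B ≤ β ^ 2 * headMass a B) :
    ∑' k, (if k ≠ 0 ∧ nsq k ≤ B then 0 else ENNReal.ofReal (‖a k‖ ^ 2)) ≤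
      ENNReal.ofReal (β ^ 2) *
        ∑' k, if k ≠ 0 ∧ nsq k ≤ B then ENNReal.ofReal (‖a k‖ ^ 2) else 0 := by
  have htail : ∑' k, (if k ≠ 0 ∧ nsq k ≤ B then 0 else ENNReal.ofReal (‖a k‖ ^ 2)) =
      ENNReal.ofReal (tailMass a B) := by
    rw [tailMass, ENNReal.ofReal_tsum_ite hsum (fun _ => by positivity)]
    congr with k
    rcases eq_or_ne k 0 with rfl | hk
    · simp [ha0]
    · by_cases hkB : nsq k ≤ B <;> simp [hk, hkB]
  have hhead : ENNReal.ofReal (headMass a B) =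
      ∑' k, if k ≠ 0 ∧ nsq k ≤ B then ENNReal.ofReal (‖a k‖ ^ 2) else 0 :=
    ENNReal.ofReal_tsum_ite hsum (fun _ => by positivity) _
  rw [htail, ← hhead, ← ENNReal.ofReal_mul (sq_nonneg β)]
  exact ENNReal.ofReal_le_ofReal h

end Quantile

lemma ENNReal.tsum_le_one_add_mul_of_tail_le {α : Type*} {p : α → Prop} [DecidablePred p]
    {g f : α → ℝ≥0∞} {ρ c : ℝ≥0∞} (hg_tail : ∀ x, ¬p x → g x ≤ ρ * f x)
    (hg_head : ∀ x, p x → ρ * f x ≤ g x)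
    (hf : ∑' x, (if p x then 0 else f x) ≤ c * ∑' x, if p x then f x else 0) :
    ∑' x, g x ≤ (1 + c) * ∑' x, if p x then g x else 0 := by
  have hsplit : ∑' x, g x = (∑' x, if p x then g x else 0) + ∑' x, if p x then 0 else g x := by
    rw [← ENNReal.tsum_add]
    congr with x
    split_ifs <;> simp
  have htail : ∑' x, (if p x then 0 else g x) ≤ c * ∑' x, if p x then g x else 0 :=
    calc ∑' x, (if p x then 0 else g x) ≤ ∑' x, ρ * if p x then 0 else f x :=
          ENNReal.tsum_le_tsum fun x => by split_ifs with h <;> simp [hg_tail x, h]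
      _ ≤ ρ * (c * ∑' x, if p x then f x else 0) := by rw [ENNReal.tsum_mul_left]; gcongr
      _ = c * ∑' x, ρ * if p x then f x else 0 := by rw [ENNReal.tsum_mul_left]; ring
      _ ≤ c * ∑' x, if p x then g x else 0 := by
          gcongr with x
          split_ifs with h <;> simp [hg_head x, h]
  calc ∑' x, g x ≤ (∑' x, if p x then g x else 0) + c * ∑' x, if p x then g x else 0 := by
        rw [hsplit]; gcongr
    _ = (1 + c) * ∑' x, if p x then g x else 0 := by ring

lemma diffusiveTime_bounds {κ Λ x : ℝ} (hκ : 0 < κ) (hΛ : 2 ≤ Λ) (hx : 2 ≤ x) :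
    (κ * x ^ 2)⁻¹ ≤ Λ * κ⁻¹ * (x ^ 2)⁻¹ * Real.log x ∧
      κ * (Λ * κ⁻¹ * (x ^ 2)⁻¹ * Real.log x) ≤ Λ := by
  have hlog2 : 1 / 2 < Real.log x :=
    (by linarith [Real.log_two_gt_d9] : (1 : ℝ) / 2 < Real.log 2).trans_le
      (Real.log_le_log (by norm_num) hx)
  have hlogx : Real.log x ≤ x ^ 2 := (Real.log_le_self (by linarith)).trans (by nlinarith)
  constructor
  · calc (κ * x ^ 2)⁻¹ = 1 * (κ⁻¹ * (x ^ 2)⁻¹) := by rw [mul_inv, one_mul]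
      _ ≤ (Λ * Real.log x) * (κ⁻¹ * (x ^ 2)⁻¹) := by gcongr; nlinarith
      _ = Λ * κ⁻¹ * (x ^ 2)⁻¹ * Real.log x := by ring
  · calc κ * (Λ * κ⁻¹ * (x ^ 2)⁻¹ * Real.log x) = Λ * (Real.log x / x ^ 2) := by
          field_simp
      _ ≤ Λ * 1 := by gcongr; exact div_le_one_of_le₀ hlogx (by positivity)
      _ = Λ := mul_one Λ

noncomputable def transferTerm (𝔞 κ T : ℝ) (a : ℤ × ℤ → ℂ) (ℓ k : ℤ × ℤ) : ℝ :=
  dotp ℓ (perp k) ^ 2 * ‖a (ℓ - k)‖ ^ 2 * nsq k ^ (-((𝔞 + 2) / 2)) *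
    timeIntegral κ T (nsq ℓ) (nsq (ℓ - k)) (nsq k)

lemma transferTerm_transverseUnit_ge {𝔞 κ T B Λ : ℝ} (h𝔞 : -2 ≤ 𝔞) (hκ0 : 0 < κ)
    (hκ1 : κ ≤ 1) (hB : 0 < B) (hT : (κ * B)⁻¹ ≤ T) (hκT : κ * T ≤ Λ) (a : ℤ × ℤ → ℂ) {m : ℤ × ℤ}
    (hm : m ≠ 0) (hmB : nsq m ≤ B) :
    (4 : ℝ) ^ (-((𝔞 + 2) / 2)) / 2 * (Real.exp (-(2 * Λ + 4)) / 128 / (κ * B ^ 3)) *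
        (nsq m ^ (-(𝔞 / 2)) * ‖a m‖ ^ 2) ≤
      transferTerm 𝔞 κ T a (transverseUnit m) (transverseUnit m - m) := by
  have hm1 := one_le_nsq_s7 hm
  have hk1 := one_le_nsq_s7 (transverseUnit_sub_ne_zero hm)
  have hk : nsq (transverseUnit m - m) ≤ 4 * nsq m := by
    linarith [nsq_sub_le (transverseUnit m) m, nsq_transverseUnit m]
  have hw := four_rpow_div_two_mul_rpow_le (by linarith) (by linarith) hk
    (nsq_le_two_mul_dotp_perp_sq m) h𝔞
  have hI := timeIntegral_ge (c := nsq (transverseUnit m - m)) hκ0 hκ1 hB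
    (nsq_transverseUnit m).le hmB (by linarith) hT hκT
  rw [transferTerm, sub_sub_cancel]
  calc _ = (4 : ℝ) ^ (-((𝔞 + 2) / 2)) / 2 * nsq m ^ (-(𝔞 / 2)) * ‖a m‖ ^ 2 *
        (Real.exp (-(2 * Λ + 4)) / 128 / (κ * B ^ 3)) := by ring
    _ ≤ dotp (transverseUnit m) (perp (transverseUnit m - m)) ^ 2 *
          nsq (transverseUnit m - m) ^ (-((𝔞 + 2) / 2)) * ‖a m‖ ^ 2 *
          timeIntegral κ T (nsq (transverseUnit m)) (nsq m) (nsq (transverseUnit m - m)) := by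
        gcongr
    _ = _ := by ring

lemma ofReal_mul_tsum_head_le_tsum_transferTerm {𝔞 κ T B Λ : ℝ} (h𝔞 : -2 ≤ 𝔞) (hκ0 : 0 < κ)
    (hκ1 : κ ≤ 1) (hB : 0 < B) (hT : (κ * B)⁻¹ ≤ T) (hκT : κ * T ≤ Λ) (a : ℤ × ℤ → ℂ) :
    ENNReal.ofReal ((4 : ℝ) ^ (-((𝔞 + 2) / 2)) / 2 *
          (Real.exp (-(2 * Λ + 4)) / 128 / (κ * B ^ 3))) *
        ∑' m : ℤ × ℤ, (if m ≠ 0 ∧ nsq m ≤ B then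
          ENNReal.ofReal (nsq m ^ (-(𝔞 / 2)) * ‖a m‖ ^ 2) else 0) ≤
      ∑' ℓ : ℤ × ℤ, ∑' k : ℤ × ℤ, if ℓ ≠ 0 ∧ nsq ℓ ≤ 1 ∧ k ≠ 0 ∧ k ≠ ℓ then
          ENNReal.ofReal (transferTerm 𝔞 κ T a ℓ k) else 0 := by
  set F : (ℤ × ℤ) × (ℤ × ℤ) → ℝ≥0∞ := fun p =>
    if p.1 ≠ 0 ∧ nsq p.1 ≤ 1 ∧ p.2 ≠ 0 ∧ p.2 ≠ p.1 then
      ENNReal.ofReal (transferTerm 𝔞 κ T a p.1 p.2) else 0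
  rw [← ENNReal.tsum_mul_left, ← ENNReal.tsum_prod' (f := F)]
  refine (ENNReal.tsum_le_tsum fun m => ?_).trans
    (ENNReal.tsum_comp_le_tsum_of_injective injective_transverseUnit_pair F)
  split_ifs with hm
  · have hℓ : transverseUnit m ≠ 0 := fun h => by simpa [h, nsq] using nsq_transverseUnit m
    simp only [F]
    rw [if_pos ⟨hℓ, (nsq_transverseUnit m).le, transverseUnit_sub_ne_zero hm.1,
      by simpa [sub_eq_self] using hm.1⟩, ← ENNReal.ofReal_mul (by positivity)]
    exact ENNReal.ofReal_le_ofReal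
      (transferTerm_transverseUnit_ge h𝔞 hκ0 hκ1 hB hT hκT a hm.1 hm.2)
  · simp

lemma tsum_weighted_le_of_tail_le {𝔞 β B : ℝ} (h𝔞 : 0 ≤ 𝔞) (hB : 0 < B) {a : ℤ × ℤ → ℂ}
    (hq : ∑' k, (if k ≠ 0 ∧ nsq k ≤ B then 0 else ENNReal.ofReal (‖a k‖ ^ 2)) ≤
      ENNReal.ofReal (β ^ 2) *
        ∑' k, if k ≠ 0 ∧ nsq k ≤ B then ENNReal.ofReal (‖a k‖ ^ 2) else 0) :
    ∑' m : ℤ × ℤ, (if m ≠ 0 then ENNReal.ofReal (nsq m ^ (-(𝔞 / 2)) * ‖a m‖ ^ 2) else 0) ≤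
      ENNReal.ofReal (1 + β ^ 2) * ∑' m : ℤ × ℤ, if m ≠ 0 ∧ nsq m ≤ B then
        ENNReal.ofReal (nsq m ^ (-(𝔞 / 2)) * ‖a m‖ ^ 2) else 0 := by
  have hρ : ∀ m : ℤ × ℤ, ENNReal.ofReal (B ^ (-(𝔞 / 2))) * ENNReal.ofReal (‖a m‖ ^ 2) =
      ENNReal.ofReal (B ^ (-(𝔞 / 2)) * ‖a m‖ ^ 2) := fun m =>
    (ENNReal.ofReal_mul (by positivity)).symm
  have key := ENNReal.tsum_le_one_add_mul_of_tail_le (p := fun m => m ≠ 0 ∧ nsq m ≤ B)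
    (g := fun m => if m ≠ 0 then ENNReal.ofReal (nsq m ^ (-(𝔞 / 2)) * ‖a m‖ ^ 2) else 0)
    (ρ := ENNReal.ofReal (B ^ (-(𝔞 / 2)))) (f := fun m => ENNReal.ofReal (‖a m‖ ^ 2))
    (fun m hm => by
      rw [hρ]
      split_ifs with h0
      · refine ENNReal.ofReal_le_ofReal (mul_le_mul_of_nonneg_right
          (Real.rpow_le_rpow_of_nonpos hB ?_ (by linarith)) (sq_nonneg _))
        exact (not_le.1 fun h => hm ⟨h0, h⟩).le
      · exact zero_le)
    (fun m hm => by
      rw [hρ, if_pos hm.1]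
      exact ENNReal.ofReal_le_ofReal (mul_le_mul_of_nonneg_right
        (Real.rpow_le_rpow_of_nonpos (by linarith [one_le_nsq_s7 hm.1]) hm.2 (by linarith))
        (sq_nonneg _)))
    hq
  rw [ENNReal.ofReal_add zero_le_one (sq_nonneg β), ENNReal.ofReal_one]
  refine key.trans_eq ?_
  congr with m
  split_ifs with h1 h2 <;> simp_all

/-- Deterministic content of Lemma 4.1 (advection–diffusion Gaussian lower bound): with
`λ = 𝔞/2 + 5` and `T = λ κ⁻¹ M⁻² log M`, for `M ≥ max(2, M^{(β)}(a))`,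
`∑_{0<|ℓ|≤1} ∑_{k≠0, k≠ℓ} ⟨ℓ,k⊥⟩² |a(ℓ−k)|² |k|^{−(𝔞+2)}
   ∫₀ᵀ (∫ₛᵀ e^{−κ|ℓ|²(T−r)} e^{−κ|ℓ−k|² r} e^{−|k|²(r−s)} dr)² ds
 ≥ c κ⁻¹ M⁻⁶ ∑_{m≠0} |m|^{−𝔞} |a m|²`. -/
theorem gaussian_lower_bound_advection (𝔞 : ℝ) (h𝔞 : 10 < 𝔞) (β : ℝ) (hβ : 1 ≤ β) :
    ∃ c : ℝ, 0 < c ∧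
      ∀ κ : ℝ, κ ∈ Set.Ioc (0 : ℝ) 1 →
      ∀ a : ℤ × ℤ → ℂ, Summable (fun k => ‖a k‖ ^ 2) → a 0 = 0 → a ≠ 0 →
      ∀ M : ℕ, 2 ≤ M → specQuantile β a ≤ M →
      ∀ T : ℝ, T = (𝔞 / 2 + 5) * κ⁻¹ * ((M : ℝ) ^ 2)⁻¹ * Real.log M →
      ENNReal.ofReal (c * κ⁻¹ * ((M : ℝ) ^ 6)⁻¹) *
          (∑' m : ℤ × ℤ,
            if m ≠ 0 then ENNReal.ofReal ((nsq m) ^ (-(𝔞 / 2)) * ‖a m‖ ^ 2) else 0) ≤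
        ∑' ℓ : ℤ × ℤ, ∑' k : ℤ × ℤ,
          (if ℓ ≠ 0 ∧ nsq ℓ ≤ 1 ∧ k ≠ 0 ∧ k ≠ ℓ then
            ENNReal.ofReal
              ((dotp ℓ (perp k)) ^ 2 * ‖a (ℓ - k)‖ ^ 2 * (nsq k) ^ (-((𝔞 + 2) / 2)) *
                ∫ s in (0 : ℝ)..T,
                  (∫ r in s..T,
                    Real.exp (-κ * nsq ℓ * (T - r)) * Real.exp (-κ * nsq (ℓ - k) * r) *
                      Real.exp (-nsq k * (r - s))) ^ 2)
          else 0) := by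
  set C := (4 : ℝ) ^ (-((𝔞 + 2) / 2)) / 2 * (Real.exp (-(2 * (𝔞 / 2 + 5) + 4)) / 128)
  refine ⟨C / (1 + β ^ 2), by positivity, ?_⟩
  rintro κ ⟨hκ0, hκ1⟩ a hsum ha0 hane M hM hMq T rfl
  have hM2 : (2 : ℝ) ≤ M := by exact_mod_cast hM
  obtain ⟨hT, hκT⟩ := diffusiveTime_bounds hκ0 (by linarith : (2 : ℝ) ≤ 𝔞 / 2 + 5) hM2
  have hq := tsum_tail_le_ofReal_mul_head hsum ha0
    (tailMass_le_of_specQuantile_le hsum ha0 hane (by positivity) hMq)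
  calc _ ≤ ENNReal.ofReal (C / (1 + β ^ 2) * κ⁻¹ * ((M : ℝ) ^ 6)⁻¹) *
        (ENNReal.ofReal (1 + β ^ 2) * _) := by
        gcongr
        exact tsum_weighted_le_of_tail_le (by linarith) (by positivity) hq
    _ = ENNReal.ofReal ((4 : ℝ) ^ (-((𝔞 + 2) / 2)) / 2 *
          (Real.exp (-(2 * (𝔞 / 2 + 5) + 4)) / 128 / (κ * ((M : ℝ) ^ 2) ^ 3))) * _ := by
        rw [← mul_assoc, ← ENNReal.ofReal_mul (by positivity)]
        congr 2
        simp only [C]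
        field_simp
    _ ≤ _ := ofReal_mul_tsum_head_le_tsum_transferTerm (by linarith) hκ0 hκ1 (by positivity)
        hT hκT a
end

section
/- Let β > 0 and 0 ≤ α ≤ α′. For every square-summable a : ℤ² → ℂ with a(0) = 0 that is not identically zero, and every integer M ≥ M^{(β)}(a), one has ∑_{k∈ℤ²∖{0}} |k|^{−2α}|a(k)|² ≤ (1+β²) M^{2(α′−α)} ∑_{k∈ℤ²∖{0}} |k|^{−2α′}|a(k)|², with both sides valued in [0,∞]. -/
open scoped ENNReal

lemma one_le_sq_of_ne {n : ℤ} (h : n ≠ 0) : (1:ℝ) ≤ (n:ℝ)^2 := by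
  have h1 : (1:ℤ) ≤ n^2 := by rcases lt_or_gt_of_ne h with h' | h' <;> nlinarith
  exact_mod_cast h1

lemma nsq_zero : nsq 0 = 0 := by simp [nsq]

lemma summable_ite (a : ℤ × ℤ → ℂ) (hsum : Summable fun k => ‖a k‖ ^ 2)
    (P : ℤ × ℤ → Prop) [DecidablePred P] :
    Summable fun k => if P k then ‖a k‖ ^ 2 else 0 := by
  refine Summable.of_nonneg_of_le (fun k => ?_) (fun k => ?_) hsum
  · split_ifs <;> positivity
  · split_ifs
    · exact le_rfl
    · positivity

lemma head_add_tail (a : ℤ × ℤ → ℂ) (h0 : a 0 = 0) {N : ℕ} (hN : 1 ≤ N) (k : ℤ × ℤ) :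
    (if k ≠ 0 ∧ nsq k ≤ (N : ℝ) ^ 2 then ‖a k‖ ^ 2 else 0)
      + (if (N : ℝ) ^ 2 < nsq k then ‖a k‖ ^ 2 else 0) = ‖a k‖ ^ 2 := by
  by_cases hk : k = 0
  · subst hk
    have h1 : ¬ ((N:ℝ)^2 < nsq 0) := by rw [nsq_zero]; exact not_lt.2 (by positivity)
    simp [h0, h1]
  · by_cases hle : nsq k ≤ (N:ℝ)^2
    · rw [if_pos ⟨hk, hle⟩, if_neg (not_lt.2 hle), add_zero]
    · rw [if_neg (fun hc => hle hc.2), if_pos (not_le.1 hle), zero_add]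

lemma specQuantile_mem (β : ℝ) (hβ : 0 < β) (a : ℤ × ℤ → ℂ)
    (hsum : Summable fun k => ‖a k‖ ^ 2) (h0 : a 0 = 0) (hne : a ≠ 0) :
    1 ≤ specQuantile β a ∧
    (∑' k : ℤ × ℤ, if ((specQuantile β a : ℕ) : ℝ) ^ 2 < nsq k then ‖a k‖ ^ 2 else 0) ≤
      β ^ 2 * ∑' k : ℤ × ℤ,
        if k ≠ 0 ∧ nsq k ≤ ((specQuantile β a : ℕ) : ℝ) ^ 2 then ‖a k‖ ^ 2 else 0 := by
  classical
  set f : ℤ × ℤ → ℝ := fun k => ‖a k‖ ^ 2 with hf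
  have hfnn : ∀ k, 0 ≤ f k := fun k => by positivity
  set T := ∑' k, f k with hT
  have hTpos : 0 < T := by
    obtain ⟨k, hk⟩ : ∃ k, a k ≠ 0 := by
      by_contra hcon; push_neg at hcon; exact hne (funext hcon)
    exact Summable.tsum_pos hsum hfnn k (pow_pos (norm_pos_iff.mpr hk) 2)
  set ε := β ^ 2 * T / (1 + β ^ 2) with hε
  have hεpos : 0 < ε := by positivity
  -- find a finset capturing all but ε of the mass
  obtain ⟨s, hs⟩ : ∃ s : Finset (ℤ × ℤ), T - ε < ∑ k ∈ s, f k := by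
    have := hsum.hasSum.eventually (Ioi_mem_nhds (show T - ε < T by linarith))
    exact this.exists
  set N : ℕ := s.sup (fun k => k.1.natAbs + k.2.natAbs) + 1 with hN
  have hN1 : 1 ≤ N := Nat.le_add_left 1 _
  have hbound : ∀ k ∈ s, nsq k ≤ (N : ℝ) ^ 2 := by
    intro k hk
    have hm : k.1.natAbs + k.2.natAbs ≤ N :=
      le_trans (Finset.le_sup (f := fun k : ℤ × ℤ => k.1.natAbs + k.2.natAbs) hk) (Nat.le_succ _)
    have hmR : ((k.1.natAbs : ℝ) + (k.2.natAbs : ℝ)) ≤ (N : ℝ) := by exact_mod_cast hm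
    have e1 : ((k.1.natAbs : ℝ)) = |(k.1 : ℝ)| := by
      rw [Nat.cast_natAbs]; push_cast; ring
    have e2 : ((k.2.natAbs : ℝ)) = |(k.2 : ℝ)| := by
      rw [Nat.cast_natAbs]; push_cast; ring
    rw [e1, e2] at hmR
    have := abs_nonneg ((k.1:ℝ)); have := abs_nonneg ((k.2:ℝ))
    have := sq_abs ((k.1:ℝ)); have := sq_abs ((k.2:ℝ))
    unfold nsq
    nlinarith [abs_nonneg ((k.1:ℝ)), abs_nonneg ((k.2:ℝ)), sq_abs ((k.1:ℝ)), sq_abs ((k.2:ℝ))]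
  -- tail N is small
  have hsummOn : Summable (fun k => if k ∈ s then f k else 0) :=
    summable_ite a hsum _
  have hsummOff : Summable (fun k => if k ∉ s then f k else 0) :=
    summable_ite a hsum _
  have hon : (∑' k, if k ∈ s then f k else 0) = ∑ k ∈ s, f k := by
    rw [tsum_eq_sum (s := s) (fun b hb => if_neg hb)]
    exact Finset.sum_congr rfl fun b hb => if_pos hb
  have hsplit : T = (∑' k, if k ∈ s then f k else 0) + (∑' k, if k ∉ s then f k else 0) := by
    rw [hT, ← Summable.tsum_add hsummOn hsummOff]
    exact tsum_congr fun k => by by_cases hk : k ∈ s <;> simp [hk]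
  have hoff : (∑' k, if k ∉ s then f k else 0) < ε := by
    rw [hon] at hsplit; linarith
  have htail_le : (∑' k, if (N:ℝ)^2 < nsq k then f k else 0)
      ≤ ∑' k, if k ∉ s then f k else 0 := by
    refine Summable.tsum_le_tsum (fun k => ?_) (summable_ite a hsum _) hsummOff
    by_cases hc : (N:ℝ)^2 < nsq k
    · have hks : k ∉ s := fun hks => absurd hc (not_lt.2 (hbound k hks))
      rw [if_pos hc, if_pos hks]
    · rw [if_neg hc]; split_ifs <;> first | exact hfnn k | exact le_rfl
  have htt : (∑' k, if k ≠ 0 ∧ nsq k ≤ (N:ℝ)^2 then f k else 0)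
      + (∑' k, if (N:ℝ)^2 < nsq k then f k else 0) = T := by
    rw [hT, ← Summable.tsum_add (summable_ite a hsum _) (summable_ite a hsum _)]
    exact tsum_congr fun k => head_add_tail a h0 hN1 k
  have hmem : N ∈ {N : ℕ | 1 ≤ N ∧
      (∑' k : ℤ × ℤ, if (N : ℝ) ^ 2 < nsq k then ‖a k‖ ^ 2 else 0) ≤
        β ^ 2 * ∑' k : ℤ × ℤ, if k ≠ 0 ∧ nsq k ≤ (N : ℝ) ^ 2 then ‖a k‖ ^ 2 else 0} := by
    refine ⟨hN1, ?_⟩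
    show (∑' k, if (N:ℝ)^2 < nsq k then f k else 0)
      ≤ β ^ 2 * ∑' k, if k ≠ 0 ∧ nsq k ≤ (N:ℝ)^2 then f k else 0
    have h1 : (∑' k, if (N:ℝ)^2 < nsq k then f k else 0) < ε := lt_of_le_of_lt htail_le hoff
    have h2 := htt
    have hb2 : (0:ℝ) < 1 + β^2 := by positivity
    rw [hε] at h1
    have htnn : 0 ≤ ∑' k, if (N:ℝ)^2 < nsq k then f k else 0 :=
      tsum_nonneg fun k => by split_ifs <;> first | exact hfnn k | exact le_rfl
    have h3 : β ^ 2 * (∑' k, if k ≠ 0 ∧ nsq k ≤ (N:ℝ)^2 then f k else 0)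
        = β ^ 2 * T - β ^ 2 * (∑' k, if (N:ℝ)^2 < nsq k then f k else 0) := by
      rw [← h2]; ring
    have h4 := (lt_div_iff₀ hb2).1 h1
    nlinarith [h3, h4, htnn, sq_nonneg β]
  have := Nat.sInf_mem ⟨N, hmem⟩
  exact this

/-- Negative-Sobolev comparison above the spectral quantile: for `0 ≤ α ≤ α′` and
`M ≥ M^{(β)}(a)`, with both sides valued in `[0,∞]`,
`∑_{k≠0} |k|^{−2α} |a k|² ≤ (1+β²) M^{2(α′−α)} ∑_{k≠0} |k|^{−2α′} |a k|²`. -/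
theorem negative_sobolev_comparison (β : ℝ) (hβ : 0 < β) (α α' : ℝ) (hα : 0 ≤ α)
    (hαα' : α ≤ α') (a : ℤ × ℤ → ℂ) (hsum : Summable fun k => ‖a k‖ ^ 2) (h0 : a 0 = 0)
    (hne : a ≠ 0) (M : ℕ) (hM : specQuantile β a ≤ M) :
    (∑' k : ℤ × ℤ, if k ≠ 0 then ENNReal.ofReal ((nsq k) ^ (-α) * ‖a k‖ ^ 2) else 0) ≤
      ENNReal.ofReal ((1 + β ^ 2) * (M : ℝ) ^ (2 * (α' - α))) *
        ∑' k : ℤ × ℤ, if k ≠ 0 then ENNReal.ofReal ((nsq k) ^ (-α') * ‖a k‖ ^ 2) else 0 := by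
  classical
  have hα' : 0 ≤ α' := hα.trans hαα'
  obtain ⟨hQ1, hQle⟩ := specQuantile_mem β hβ a hsum h0 hne
  have hM1 : 1 ≤ M := hQ1.trans hM
  have hM1R : (1:ℝ) ≤ (M:ℝ) := by exact_mod_cast hM1
  have hQMR : ((specQuantile β a : ℕ) : ℝ) ^ 2 ≤ (M:ℝ) ^ 2 := by
    have : ((specQuantile β a : ℕ) : ℝ) ≤ (M:ℝ) := by exact_mod_cast hM
    have h0' : (0:ℝ) ≤ ((specQuantile β a : ℕ) : ℝ) := by positivity
    nlinarith
  have hfnn : ∀ k : ℤ × ℤ, (0:ℝ) ≤ ‖a k‖ ^ 2 := fun k => by positivity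
  -- quantile inequality at level M
  have htailM : (∑' k : ℤ × ℤ, if (M : ℝ) ^ 2 < nsq k then ‖a k‖ ^ 2 else 0) ≤
      β ^ 2 * ∑' k : ℤ × ℤ, if k ≠ 0 ∧ nsq k ≤ (M : ℝ) ^ 2 then ‖a k‖ ^ 2 else 0 := by
    have h1 : (∑' k : ℤ × ℤ, if (M : ℝ) ^ 2 < nsq k then ‖a k‖ ^ 2 else 0) ≤
        ∑' k : ℤ × ℤ, if ((specQuantile β a : ℕ) : ℝ) ^ 2 < nsq k then ‖a k‖ ^ 2 else 0 := by
      refine Summable.tsum_le_tsum (fun k => ?_) (summable_ite a hsum _) (summable_ite a hsum _)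
      by_cases hc : (M:ℝ)^2 < nsq k
      · rw [if_pos hc, if_pos (lt_of_le_of_lt hQMR hc)]
      · rw [if_neg hc]; split_ifs <;> first | exact hfnn k | exact le_rfl
    have h2 : (∑' k : ℤ × ℤ, if k ≠ 0 ∧ nsq k ≤ ((specQuantile β a : ℕ) : ℝ) ^ 2
          then ‖a k‖ ^ 2 else 0) ≤
        ∑' k : ℤ × ℤ, if k ≠ 0 ∧ nsq k ≤ (M : ℝ) ^ 2 then ‖a k‖ ^ 2 else 0 := by
      refine Summable.tsum_le_tsum (fun k => ?_) (summable_ite a hsum _) (summable_ite a hsum _)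
      by_cases hc : k ≠ 0 ∧ nsq k ≤ ((specQuantile β a : ℕ) : ℝ) ^ 2
      · rw [if_pos hc, if_pos ⟨hc.1, hc.2.trans hQMR⟩]
      · rw [if_neg hc]; split_ifs <;> first | exact hfnn k | exact le_rfl
    calc (∑' k : ℤ × ℤ, if (M : ℝ) ^ 2 < nsq k then ‖a k‖ ^ 2 else 0)
        ≤ _ := h1
      _ ≤ _ := hQle
      _ ≤ _ := by
          have hb : (0:ℝ) ≤ β ^ 2 := by positivity
          exact mul_le_mul_of_nonneg_left h2 hb
  -- real-valued functions
  set g : ℤ × ℤ → ℝ := fun k => if k ≠ 0 then nsq k ^ (-α) * ‖a k‖ ^ 2 else 0 with hg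
  set h : ℤ × ℤ → ℝ := fun k => if k ≠ 0 then nsq k ^ (-α') * ‖a k‖ ^ 2 else 0 with hh
  have hgnn : ∀ k, 0 ≤ g k := fun k => by
    rw [hg]; dsimp only; split_ifs
    · exact mul_nonneg (Real.rpow_nonneg (nsq_nonneg k) _) (hfnn k)
    · exact le_rfl
  have hhnn : ∀ k, 0 ≤ h k := fun k => by
    rw [hh]; dsimp only; split_ifs
    · exact mul_nonneg (Real.rpow_nonneg (nsq_nonneg k) _) (hfnn k)
    · exact le_rfl
  have hdom : ∀ (e : ℝ), 0 ≤ e → ∀ k : ℤ × ℤ,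
      (if k ≠ 0 then nsq k ^ (-e) * ‖a k‖ ^ 2 else 0) ≤ ‖a k‖ ^ 2 := by
    intro e he k
    split_ifs with hk
    · have h1 : nsq k ^ (-e) ≤ 1 :=
        Real.rpow_le_one_of_one_le_of_nonpos (one_le_nsq hk) (neg_nonpos.2 he)
      exact mul_le_of_le_one_left (hfnn k) h1
    · exact hfnn k
  have hgS : Summable g :=
    Summable.of_nonneg_of_le hgnn (hdom α hα) hsum
  have hhS : Summable h :=
    Summable.of_nonneg_of_le hhnn (hdom α' hα') hsum
  -- rewrite both sides via ofReal
  have hLHS : (∑' k : ℤ × ℤ, if k ≠ 0 then ENNReal.ofReal ((nsq k) ^ (-α) * ‖a k‖ ^ 2) else 0)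
      = ENNReal.ofReal (∑' k, g k) := by
    rw [ENNReal.ofReal_tsum_of_nonneg hgnn hgS]
    refine tsum_congr fun k => ?_
    rw [hg]; dsimp only; split_ifs <;> simp
  have hRHS : (∑' k : ℤ × ℤ, if k ≠ 0 then ENNReal.ofReal ((nsq k) ^ (-α') * ‖a k‖ ^ 2) else 0)
      = ENNReal.ofReal (∑' k, h k) := by
    rw [ENNReal.ofReal_tsum_of_nonneg hhnn hhS]
    refine tsum_congr fun k => ?_
    rw [hh]; dsimp only; split_ifs <;> simp
  rw [hLHS, hRHS, ← ENNReal.ofReal_mul (by positivity)]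
  refine ENNReal.ofReal_le_ofReal ?_
  -- now a purely real inequality
  set P2 : ℝ := (M:ℝ) ^ 2 with hP2
  have hP2pos : 0 < P2 := by rw [hP2]; positivity
  have hP2one : 1 ≤ P2 := by rw [hP2]; nlinarith
  have hMpow : (M:ℝ) ^ (2 * (α' - α)) = P2 ^ (α' - α) := by
    rw [hP2, ← Real.rpow_natCast (M:ℝ) 2, ← Real.rpow_mul (by positivity)]
    norm_num
  -- split g into low and high parts
  set glow : ℤ × ℤ → ℝ :=
    fun k => if k ≠ 0 ∧ nsq k ≤ P2 then nsq k ^ (-α) * ‖a k‖ ^ 2 else 0 with hglow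
  set gth : ℤ × ℤ → ℝ :=
    fun k => if P2 < nsq k then nsq k ^ (-α) * ‖a k‖ ^ 2 else 0 with hgth
  have hsplit : ∀ k, g k = glow k + gth k := by
    intro k
    rw [hg, hglow, hgth]; dsimp only
    by_cases hk : k = 0
    · have h2 : ¬ (P2 < nsq k) := by rw [hk, nsq_zero]; exact not_lt.2 hP2pos.le
      have h3 : ¬ (k ≠ 0) := by simp [hk]
      have h4 : ¬ (k ≠ 0 ∧ nsq k ≤ P2) := fun hc => h3 hc.1
      rw [if_neg h3, if_neg h4, if_neg h2, add_zero]
    · by_cases hle : nsq k ≤ P2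
      · rw [if_pos hk, if_pos ⟨hk, hle⟩, if_neg (not_lt.2 hle), add_zero]
      · rw [if_pos hk, if_neg (fun hc => hle hc.2), if_pos (not_le.1 hle), zero_add]
  have hglownn : ∀ k, 0 ≤ glow k := fun k => by
    rw [hglow]; dsimp only; split_ifs
    · exact mul_nonneg (Real.rpow_nonneg (nsq_nonneg k) _) (hfnn k)
    · exact le_rfl
  have hgthnn : ∀ k, 0 ≤ gth k := fun k => by
    rw [hgth]; dsimp only; split_ifs
    · exact mul_nonneg (Real.rpow_nonneg (nsq_nonneg k) _) (hfnn k)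
    · exact le_rfl
  have hglowS : Summable glow := by
    refine Summable.of_nonneg_of_le hglownn (fun k => ?_) hsum
    rw [hglow]; dsimp only
    split_ifs with hc
    · have h1 : nsq k ^ (-α) ≤ 1 :=
        Real.rpow_le_one_of_one_le_of_nonpos (one_le_nsq hc.1) (neg_nonpos.2 hα)
      exact mul_le_of_le_one_left (hfnn k) h1
    · exact hfnn k
  have hgthS : Summable gth := by
    refine Summable.of_nonneg_of_le hgthnn (fun k => ?_) hsum
    rw [hgth]; dsimp only
    split_ifs with hc
    · have h1 : nsq k ^ (-α) ≤ 1 :=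
        Real.rpow_le_one_of_one_le_of_nonpos (hP2one.trans hc.le) (neg_nonpos.2 hα)
      exact mul_le_of_le_one_left (hfnn k) h1
    · exact hfnn k
  have hsum_split : (∑' k, g k) = (∑' k, glow k) + (∑' k, gth k) := by
    rw [← Summable.tsum_add hglowS hgthS]
    exact tsum_congr hsplit
  have hThnn : 0 ≤ ∑' k, h k := tsum_nonneg hhnn
  -- Bound A : low part
  have hboundA : (∑' k, glow k) ≤ P2 ^ (α' - α) * ∑' k, h k := by
    rw [← tsum_mul_left]
    refine Summable.tsum_le_tsum (fun k => ?_) hglowS (by exact Summable.mul_left _ hhS)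
    rw [hglow, hh]; dsimp only
    split_ifs with hc hk hk2
    · have hpos : 0 < nsq k := lt_of_lt_of_le one_pos (one_le_nsq hc.1)
      have e1 : nsq k ^ (-α) = nsq k ^ (α' - α) * nsq k ^ (-α') := by
        rw [← Real.rpow_add hpos]; ring_nf
      calc nsq k ^ (-α) * ‖a k‖ ^ 2
          = nsq k ^ (α' - α) * (nsq k ^ (-α') * ‖a k‖ ^ 2) := by rw [e1]; ring
        _ ≤ P2 ^ (α' - α) * (nsq k ^ (-α') * ‖a k‖ ^ 2) := by
            refine mul_le_mul_of_nonneg_right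
              (Real.rpow_le_rpow (nsq_nonneg k) hc.2 (sub_nonneg.2 hαα')) ?_
            exact mul_nonneg (Real.rpow_nonneg (nsq_nonneg k) _) (hfnn k)
    · exact absurd hc.1 hk
    · exact mul_nonneg (Real.rpow_nonneg hP2pos.le _)
        (mul_nonneg (Real.rpow_nonneg (nsq_nonneg k) _) (hfnn k))
    · simp
  -- Bound B : high part
  have hboundB : (∑' k, gth k) ≤ β ^ 2 * (P2 ^ (α' - α) * ∑' k, h k) := by
    have hstep1 : (∑' k, gth k) ≤
        P2 ^ (-α) * ∑' k : ℤ × ℤ, (if (M : ℝ) ^ 2 < nsq k then ‖a k‖ ^ 2 else 0) := by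
      rw [← tsum_mul_left]
      refine Summable.tsum_le_tsum (fun k => ?_) hgthS
        (by exact Summable.mul_left _ (summable_ite a hsum _))
      rw [hgth]; dsimp only
      rw [← hP2]
      split_ifs with hc
      · refine mul_le_mul_of_nonneg_right ?_ (hfnn k)
        exact Real.rpow_le_rpow_of_nonpos hP2pos hc.le (neg_nonpos.2 hα)
      · simp
    have hstep3 : (∑' k : ℤ × ℤ, if k ≠ 0 ∧ nsq k ≤ (M : ℝ) ^ 2 then ‖a k‖ ^ 2 else 0)
        ≤ P2 ^ α' * ∑' k, h k := by
      rw [← tsum_mul_left]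
      refine Summable.tsum_le_tsum (fun k => ?_) (summable_ite a hsum _)
        (by exact Summable.mul_left _ hhS)
      rw [hh]; dsimp only
      rw [← hP2]
      split_ifs with hc hk hk2
      · have hpos : 0 < nsq k := lt_of_lt_of_le one_pos (one_le_nsq hc.1)
        have e1 : ‖a k‖ ^ 2 = nsq k ^ α' * (nsq k ^ (-α') * ‖a k‖ ^ 2) := by
          rw [← mul_assoc, ← Real.rpow_add hpos]
          simp
        calc ‖a k‖ ^ 2 = nsq k ^ α' * (nsq k ^ (-α') * ‖a k‖ ^ 2) := e1
          _ ≤ P2 ^ α' * (nsq k ^ (-α') * ‖a k‖ ^ 2) := by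
              refine mul_le_mul_of_nonneg_right
                (Real.rpow_le_rpow (nsq_nonneg k) hc.2 hα') ?_
              exact mul_nonneg (Real.rpow_nonneg (nsq_nonneg k) _) (hfnn k)
      · exact absurd hc.1 hk
      · exact mul_nonneg (Real.rpow_nonneg hP2pos.le _)
          (mul_nonneg (Real.rpow_nonneg (nsq_nonneg k) _) (hfnn k))
      · simp
    have hP2a : 0 ≤ P2 ^ (-α) := Real.rpow_nonneg hP2pos.le _
    have hcomb : P2 ^ (-α) * P2 ^ α' = P2 ^ (α' - α) := by
      rw [← Real.rpow_add hP2pos]; ring_nf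
    calc (∑' k, gth k)
        ≤ P2 ^ (-α) * ∑' k : ℤ × ℤ, (if (M : ℝ) ^ 2 < nsq k then ‖a k‖ ^ 2 else 0) := hstep1
      _ ≤ P2 ^ (-α) * (β ^ 2 * ∑' k : ℤ × ℤ,
            if k ≠ 0 ∧ nsq k ≤ (M : ℝ) ^ 2 then ‖a k‖ ^ 2 else 0) :=
          mul_le_mul_of_nonneg_left htailM hP2a
      _ ≤ P2 ^ (-α) * (β ^ 2 * (P2 ^ α' * ∑' k, h k)) := by
          refine mul_le_mul_of_nonneg_left ?_ hP2a
          exact mul_le_mul_of_nonneg_left hstep3 (by positivity)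
      _ = β ^ 2 * (P2 ^ (-α) * P2 ^ α' * ∑' k, h k) := by ring
      _ = β ^ 2 * (P2 ^ (α' - α) * ∑' k, h k) := by rw [hcomb]
  calc (∑' k, g k) = (∑' k, glow k) + (∑' k, gth k) := hsum_split
    _ ≤ P2 ^ (α' - α) * ∑' k, h k + β ^ 2 * (P2 ^ (α' - α) * ∑' k, h k) := by
        exact add_le_add hboundA hboundB
    _ = (1 + β ^ 2) * P2 ^ (α' - α) * ∑' k, h k := by ring
    _ = (1 + β ^ 2) * (M:ℝ) ^ (2 * (α' - α)) * ∑' k, h k := by rw [hMpow]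
    _ = (1 + β ^ 2) * (M:ℝ) ^ (2 * (α' - α)) * ∑' k, h k := rfl
end

section
/- Let q > 2, δ ∈ (0, 1/4) and λ > 0. There exists t₀ > 0 such that for every κ ∈ (0,1] and every integer M₀ ≥ 1 one has ∑_{i=0}^{L} λ κ^{−1} Ĥ_i^{−2+δ} log(Ĥ_i) ≤ t₀, where Ĥ_i = max(M₀ − i, κ^{−q}) ∈ ℝ and L = min{ i ∈ ℕ : M₀ − i ≤ κ^{−q} }. -/
/-- Step inequality for the telescoping sum. -/
lemma descent_key_step (x : ℝ) (hx : 2 ≤ x) :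
    2 * x ^ (-(1/2) : ℝ) + x ^ (-(3/2) : ℝ) ≤ 2 * (x - 1) ^ (-(1/2) : ℝ) := by
  have hx0 : (0:ℝ) < x := by linarith
  have hx1 : (0:ℝ) < x - 1 := by linarith
  have e1 : x ^ (-(1/2) : ℝ) = (Real.sqrt x)⁻¹ := by
    rw [Real.rpow_neg hx0.le, Real.sqrt_eq_rpow]
  have e2 : (x - 1) ^ (-(1/2) : ℝ) = (Real.sqrt (x - 1))⁻¹ := by
    rw [Real.rpow_neg hx1.le, Real.sqrt_eq_rpow]
  have e3 : x ^ (-(3/2) : ℝ) = (Real.sqrt x ^ 3)⁻¹ := by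
    rw [Real.rpow_neg hx0.le]
    congr 1
    rw [Real.sqrt_eq_rpow, ← Real.rpow_natCast (x ^ ((1:ℝ)/2)) 3, ← Real.rpow_mul hx0.le]
    norm_num
  rw [e1, e2, e3]
  have ha0 : 0 < Real.sqrt (x - 1) := Real.sqrt_pos.mpr hx1
  have hb0 : 0 < Real.sqrt x := Real.sqrt_pos.mpr hx0
  set a := Real.sqrt (x - 1)
  set b := Real.sqrt x
  have ha2 : a ^ 2 = x - 1 := Real.sq_sqrt hx1.le
  have hb2 : b ^ 2 = x := Real.sq_sqrt hx0.le
  have hu : 0 ≤ a * (2 * b ^ 2 + 1) := by positivity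
  have hsq : (a * (2 * b ^ 2 + 1)) ^ 2 ≤ (2 * b ^ 3) ^ 2 := by nlinarith [sq_nonneg b]
  have h1 : a * (2 * b ^ 2 + 1) ≤ 2 * b ^ 3 := by
    calc a * (2 * b ^ 2 + 1) = Real.sqrt ((a * (2 * b ^ 2 + 1)) ^ 2) := (Real.sqrt_sq hu).symm
      _ ≤ Real.sqrt ((2 * b ^ 3) ^ 2) := Real.sqrt_le_sqrt hsq
      _ = 2 * b ^ 3 := Real.sqrt_sq (by positivity)
  have hb3 : (0:ℝ) < b ^ 3 := by positivity
  have h2 : (2 * b ^ 2 + 1) / b ^ 3 ≤ 2 / a := by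
    rw [div_le_div_iff₀ hb3 ha0]
    nlinarith [h1]
  have h3 : 2 * b⁻¹ + (b ^ 3)⁻¹ = (2 * b ^ 2 + 1) / b ^ 3 := by
    field_simp
  rw [h3, show 2 * a⁻¹ = 2 / a by rw [div_eq_mul_inv]]
  exact h2

/-- Telescoping bound on the partial sums of `(M₀ - i) ^ (-3/2)`. -/
lemma descent_tele (M₀ : ℕ) : ∀ L : ℕ, (∀ i, i < L → (2:ℝ) ≤ (M₀ : ℝ) - i) →
    ∑ i ∈ Finset.range L, ((M₀ : ℝ) - i) ^ (-(3/2) : ℝ)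
      ≤ 2 * ((M₀ : ℝ) - L) ^ (-(1/2) : ℝ) := by
  intro L
  induction L with
  | zero =>
    intro _
    simp only [Finset.range_zero, Finset.sum_empty, Nat.cast_zero, sub_zero]
    positivity
  | succ k ih =>
    intro h
    rw [Finset.sum_range_succ]
    have hx : (2:ℝ) ≤ (M₀ : ℝ) - k := h k (Nat.lt_succ_self k)
    have hih := ih (fun i hi => h i (hi.trans (Nat.lt_succ_self k)))
    have hkey := descent_key_step ((M₀ : ℝ) - k) hx
    have hcast : (M₀ : ℝ) - ((k + 1 : ℕ) : ℝ) = ((M₀ : ℝ) - k) - 1 := by push_cast; ring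
    rw [hcast]
    linarith

/-- Deterministic bound on the total duration of the spectral-median descent scheme
(Lemma 3.4): for `q > 2`, `δ ∈ (0, 1/4)` and `λ > 0` there exists `t₀ > 0` such that for all
`κ ∈ (0,1]` and all integers `M₀ ≥ 1`, with `Ĥ_i = max(M₀ − i, κ^{−q})` and
`L = min{ i ∈ ℕ : M₀ − i ≤ κ^{−q} }`, one has
`∑_{i=0}^{L} λ κ⁻¹ Ĥ_i^{−2+δ} log Ĥ_i ≤ t₀`. -/
theorem descent_time_bound (q : ℝ) (hq : 2 < q) (δ : ℝ) (hδ : δ ∈ Set.Ioo (0 : ℝ) (1 / 4))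
    (lam : ℝ) (hlam : 0 < lam) :
    ∃ t₀ : ℝ, 0 < t₀ ∧ ∀ κ : ℝ, κ ∈ Set.Ioc (0 : ℝ) 1 → ∀ M₀ : ℕ, 1 ≤ M₀ →
      ∀ L : ℕ, L = sInf {i : ℕ | (M₀ : ℝ) - i ≤ κ ^ (-q)} →
      ∑ i ∈ Finset.range (L + 1),
          lam * κ⁻¹ * (max ((M₀ : ℝ) - i) (κ ^ (-q))) ^ (δ - 2) *
            Real.log (max ((M₀ : ℝ) - i) (κ ^ (-q))) ≤ t₀ := by
  obtain ⟨hδ0, hδ14⟩ := hδ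
  refine ⟨5 * lam / δ, by positivity, ?_⟩
  rintro κ ⟨hκ0, hκ1⟩ M₀ hM₀ L hL
  set K := κ ^ (-q) with hKdef
  have hK1 : 1 ≤ K := Real.one_le_rpow_of_pos_of_le_one_of_nonpos hκ0 hκ1 (by linarith)
  have hK0 : (0:ℝ) < K := lt_of_lt_of_le one_pos hK1
  -- basic facts about L
  have hMmem : M₀ ∈ {i : ℕ | (M₀ : ℝ) - i ≤ K} := by
    simp only [Set.mem_setOf_eq, sub_self]
    exact hK0.le
  have hne : {i : ℕ | (M₀ : ℝ) - i ≤ K}.Nonempty := ⟨M₀, hMmem⟩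
  have hLmem : (M₀ : ℝ) - L ≤ K := by
    have := Nat.sInf_mem hne
    rw [← hL] at this
    exact this
  have hLlt : ∀ i, i < L → K < (M₀ : ℝ) - i := by
    intro i hi
    have : i ∉ {i : ℕ | (M₀ : ℝ) - i ≤ K} := Nat.notMem_of_lt_sInf (hL ▸ hi)
    exact not_le.mp this
  have h2 : ∀ i, i < L → (2:ℝ) ≤ (M₀ : ℝ) - i := by
    intro i hi
    have h1 : (1:ℝ) < (M₀ : ℝ) - i := lt_of_le_of_lt hK1 (hLlt i hi)
    have hcast : ((i + 1 : ℕ) : ℝ) < (M₀ : ℝ) := by push_cast; linarith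
    have hi1 : i + 1 < M₀ := Nat.cast_lt.mp hcast
    have : ((i + 2 : ℕ) : ℝ) ≤ (M₀ : ℝ) := Nat.cast_le.mpr (Nat.succ_le_of_lt hi1)
    push_cast at this
    linarith
  -- per-term bound
  have key1 : ∀ H : ℝ, 1 ≤ H →
      lam * κ⁻¹ * H ^ (δ - 2) * Real.log H ≤ lam / δ * κ⁻¹ * H ^ (-(3/2) : ℝ) := by
    intro H hH
    have hH0 : (0:ℝ) < H := lt_of_lt_of_le one_pos hH
    have hlog : Real.log H ≤ H ^ δ / δ := Real.log_le_rpow_div hH0.le hδ0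
    have hpos : 0 ≤ lam * κ⁻¹ * H ^ (δ - 2) := by positivity
    calc lam * κ⁻¹ * H ^ (δ - 2) * Real.log H
        ≤ lam * κ⁻¹ * H ^ (δ - 2) * (H ^ δ / δ) := mul_le_mul_of_nonneg_left hlog hpos
      _ = lam / δ * κ⁻¹ * H ^ (δ - 2 + δ) := by rw [Real.rpow_add hH0]; ring
      _ ≤ lam / δ * κ⁻¹ * H ^ (-(3/2) : ℝ) := by
          apply mul_le_mul_of_nonneg_left
            (Real.rpow_le_rpow_of_exponent_le hH (by linarith)) (by positivity)
  -- bound on the truncated telescoping sum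
  have htel := descent_tele M₀ L h2
  have hsum1 : ∑ i ∈ Finset.range L, ((M₀ : ℝ) - i) ^ (-(3/2) : ℝ)
      ≤ 4 * K ^ (-(1/2) : ℝ) := by
    cases L with
    | zero =>
      simp only [Finset.range_zero, Finset.sum_empty]
      positivity
    | succ k =>
      have hgtK : K < (M₀ : ℝ) - k := hLlt k (Nat.lt_succ_self k)
      have h2k : (2:ℝ) ≤ (M₀ : ℝ) - k := h2 k (Nat.lt_succ_self k)
      have hcast : (M₀ : ℝ) - ((k + 1 : ℕ) : ℝ) = ((M₀ : ℝ) - k) - 1 := by push_cast; ring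
      have hKM : K / 2 ≤ (M₀ : ℝ) - ((k + 1 : ℕ) : ℝ) := by
        rw [hcast]
        rcases le_total K 2 with h | h
        · linarith
        · linarith
      have hA : ((M₀ : ℝ) - ((k + 1 : ℕ) : ℝ)) ^ (-(1/2) : ℝ) ≤ 2 * K ^ (-(1/2) : ℝ) := by
        have hKhalf : (0:ℝ) < K / 2 := by positivity
        calc ((M₀ : ℝ) - ((k + 1 : ℕ) : ℝ)) ^ (-(1/2) : ℝ)
            ≤ (K / 2) ^ (-(1/2) : ℝ) :=
              Real.rpow_le_rpow_of_nonpos hKhalf hKM (by norm_num)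
          _ = K ^ (-(1/2) : ℝ) / 2 ^ (-(1/2) : ℝ) :=
              Real.div_rpow hK0.le (by norm_num : (0:ℝ) ≤ 2) _
          _ = K ^ (-(1/2) : ℝ) * 2 ^ ((1/2) : ℝ) := by
              rw [Real.rpow_neg (by norm_num : (0:ℝ) ≤ 2), div_eq_mul_inv, inv_inv]
          _ ≤ K ^ (-(1/2) : ℝ) * 2 := by
              apply mul_le_mul_of_nonneg_left _ (Real.rpow_nonneg hK0.le _)
              calc (2:ℝ) ^ ((1/2) : ℝ) ≤ 2 ^ (1 : ℝ) :=
                    Real.rpow_le_rpow_of_exponent_le one_le_two (by norm_num)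
                _ = 2 := Real.rpow_one 2
          _ = 2 * K ^ (-(1/2) : ℝ) := by ring
      linarith [htel]
  -- κ⁻¹ * K^{-1/2} ≤ 1
  have hκK : κ⁻¹ * K ^ (-(1/2) : ℝ) ≤ 1 := by
    have hKe : K ^ (-(1/2) : ℝ) = κ ^ (q / 2) := by
      rw [hKdef, ← Real.rpow_mul hκ0.le]
      congr 1
      ring
    rw [hKe, ← Real.rpow_neg_one κ, ← Real.rpow_add hκ0]
    exact Real.rpow_le_one hκ0.le hκ1 (by linarith)
  have hK32 : K ^ (-(3/2) : ℝ) ≤ K ^ (-(1/2) : ℝ) :=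
    Real.rpow_le_rpow_of_exponent_le hK1 (by norm_num)
  calc ∑ i ∈ Finset.range (L + 1),
          lam * κ⁻¹ * (max ((M₀ : ℝ) - i) K) ^ (δ - 2) *
            Real.log (max ((M₀ : ℝ) - i) K)
      ≤ ∑ i ∈ Finset.range (L + 1),
          lam / δ * κ⁻¹ * (max ((M₀ : ℝ) - i) K) ^ (-(3/2) : ℝ) :=
        Finset.sum_le_sum fun i _ => key1 _ (le_trans hK1 (le_max_right _ _))
    _ = lam / δ * κ⁻¹ *
          ((∑ i ∈ Finset.range L, ((M₀ : ℝ) - i) ^ (-(3/2) : ℝ)) + K ^ (-(3/2) : ℝ)) := by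
        rw [Finset.sum_range_succ, max_eq_right hLmem, mul_add, Finset.mul_sum]
        congr 1
        refine Finset.sum_congr rfl fun i hi => ?_
        rw [max_eq_left (hLlt i (Finset.mem_range.mp hi)).le]
    _ ≤ lam / δ * κ⁻¹ * (4 * K ^ (-(1/2) : ℝ) + K ^ (-(1/2) : ℝ)) := by
        apply mul_le_mul_of_nonneg_left _ (by positivity)
        linarith
    _ = 5 * (lam / δ) * (κ⁻¹ * K ^ (-(1/2) : ℝ)) := by ring
    _ ≤ 5 * (lam / δ) * 1 := mul_le_mul_of_nonneg_left hκK (by positivity)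
    _ = 5 * lam / δ := by ring
end
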